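/- arXiv:2206.04549 — 5 statements merged into one kernel-verified Lean document; each statement's English description precedes it below -/
import Mathlib

section
/- There exists an absolute constant C > 0 such that for all positive integers m, n and every matrix A ∈ ℝ^{m×n} with ‖A‖_{1→∞} ≤ 1, there exists a vector v ∈ {−1,+1}^n such that ‖Av‖_∞ ≤ C·√(n·log(m/n + 2)). -/
open Finset
namespace SpencerAux


variable {Ω : Type*} [Fintype Ω] {β : Type*} [DecidableEq β]

def cnt (f : Ω → β) (b : β) : ℕ := #(univ.filter fun ω => f ω = b)

noncomputable def ent (f : Ω → β) : ℝ :=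
  (∑ ω : Ω, Real.log ((Fintype.card Ω : ℝ) / cnt f (f ω))) / Fintype.card Ω

lemma cnt_pos (f : Ω → β) (ω : Ω) : 0 < cnt f (f ω) :=
  card_pos.2 ⟨ω, by simp [cnt]⟩

lemma cnt_le_card (f : Ω → β) (b : β) : cnt f b ≤ Fintype.card Ω :=
  card_filter_le _ _

lemma sum_cnt (f : Ω → β) : ∑ b ∈ univ.image f, cnt f b = Fintype.card Ω := by
  classical
  rw [Fintype.card, card_eq_sum_card_fiberwise (fun x _ => mem_image_of_mem f (mem_univ x))]
  rfl

lemma cnt_pos_of_mem_image (f : Ω → β) {b : β} (hb : b ∈ univ.image f) : 0 < cnt f b := by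
  obtain ⟨ω, -, rfl⟩ := mem_image.1 hb; exact cnt_pos f ω

/-- Existence of a large fiber. -/
lemma exists_large_fiber [Nonempty Ω] (f : Ω → β) :
    ∃ b : β, (Fintype.card Ω : ℝ) * Real.exp (-ent f) ≤ cnt f b := by
  have hN : (0:ℝ) < Fintype.card Ω := by exact_mod_cast Fintype.card_pos
  have hsum : ∑ ω : Ω, Real.log ((Fintype.card Ω : ℝ) / cnt f (f ω))
      ≤ ∑ _ω : Ω, ent f := by
    rw [Finset.sum_const, card_univ, nsmul_eq_mul, ent, mul_div_cancel₀ _ hN.ne']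
  obtain ⟨ω, -, hω⟩ := Finset.exists_le_of_sum_le univ_nonempty hsum
  refine ⟨f ω, ?_⟩
  have hc : (0:ℝ) < cnt f (f ω) := by exact_mod_cast cnt_pos f ω
  have := (Real.log_le_iff_le_exp (by positivity)).1 hω
  rw [div_le_iff₀ hc] at this
  calc (Fintype.card Ω : ℝ) * Real.exp (-ent f)
      ≤ (Real.exp (ent f) * cnt f (f ω)) * Real.exp (-ent f) := by
        apply mul_le_mul_of_nonneg_right this (Real.exp_nonneg _)
    _ = cnt f (f ω) := by rw [mul_comm (Real.exp (ent f)), mul_assoc, ← Real.exp_add]; simp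

/-- Subadditivity of entropy. -/
lemma ent_joint_le {ι : Type*} [Fintype ι] [DecidableEq ι] (f : ι → Ω → β) :
    ent (fun ω i => f i ω) ≤ ∑ i, ent (f i) := by
  classical
  cases isEmpty_or_nonempty Ω with
  | inl h => simp [ent]
  | inr h =>
  have hN : (0:ℝ) < Fintype.card Ω := by exact_mod_cast Fintype.card_pos
  set N : ℝ := (Fintype.card Ω : ℝ) with hNdef
  set g : Ω → ι → β := fun ω i => f i ω with hg
  have hcg : ∀ ω, (0:ℝ) < cnt g (g ω) := fun ω => by exact_mod_cast cnt_pos g ω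
  have hci : ∀ (i) (ω), (0:ℝ) < cnt (f i) (f i ω) := fun i ω => by exact_mod_cast cnt_pos (f i) ω
  suffices h : ∑ ω : Ω, Real.log (N / cnt g (g ω))
      ≤ ∑ ω : Ω, ∑ i, Real.log (N / cnt (f i) (f i ω)) by
    have h2 : ∑ i, ent (f i) = (∑ ω : Ω, ∑ i, Real.log (N / cnt (f i) (f i ω))) / N := by
      rw [Finset.sum_comm]; simp only [ent, ← Finset.sum_div, hNdef]
    rw [ent, h2]
    exact (div_le_div_iff_of_pos_right hN).2 h
  have hrhs : ∀ ω : Ω, ∑ i, Real.log (N / cnt (f i) (f i ω))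
      = Real.log (∏ i, (N / cnt (f i) (f i ω))) := by
    intro ω
    rw [Real.log_prod]
    intro i _
    exact (div_pos hN (hci i ω)).ne'
  have hProdPos : ∀ ω : Ω, (0:ℝ) < ∏ i, (N / cnt (f i) (f i ω)) := by
    intro ω; exact Finset.prod_pos fun i _ => div_pos hN (hci i ω)
  simp only [hrhs]
  set W : Ω → ℝ := fun ω => (N / cnt g (g ω)) / ∏ i, (N / cnt (f i) (f i ω)) with hW
  have hWpos : ∀ ω, 0 < W ω := fun ω => div_pos (div_pos hN (hcg ω)) (hProdPos ω)
  have key : ∑ ω : Ω, W ω ≤ N := by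
    calc ∑ ω : Ω, W ω
        = ∑ b ∈ univ.image g, (cnt g b) •
            ((N / cnt g b) / ∏ i, (N / cnt (f i) (b i))) :=
          Finset.sum_comp (fun b : ι → β => (N / cnt g b) / ∏ i, (N / cnt (f i) (b i))) g
      _ = ∑ b ∈ univ.image g, N * ∏ i, ((cnt (f i) (b i) : ℝ) / N) := by
          apply Finset.sum_congr rfl
          intro b hb
          have hcb : (0:ℝ) < cnt g b := by exact_mod_cast cnt_pos_of_mem_image g hb
          have hcbi : ∀ i, (0:ℝ) < cnt (f i) (b i) := by
            intro i
            obtain ⟨ω, -, rfl⟩ := mem_image.1 hb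
            exact hci i ω
          have h1 : (0:ℝ) < ∏ i, (cnt (f i) (b i) : ℝ) :=
            Finset.prod_pos fun i _ => hcbi i
          rw [nsmul_eq_mul, Finset.prod_div_distrib, Finset.prod_div_distrib,
            Finset.prod_const]
          field_simp
      _ ≤ ∑ b ∈ Fintype.piFinset (fun i : ι => univ.image (f i)),
            N * ∏ i, ((cnt (f i) (b i) : ℝ) / N) := by
          apply Finset.sum_le_sum_of_subset_of_nonneg
          · intro b hb
            rw [Fintype.mem_piFinset]
            intro i
            obtain ⟨ω, -, rfl⟩ := mem_image.1 hb
            exact mem_image_of_mem _ (mem_univ ω)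
          · intro b _ _
            have : (0:ℝ) ≤ ∏ i, ((cnt (f i) (b i) : ℝ) / N) :=
              Finset.prod_nonneg fun i _ => by positivity
            positivity
      _ = N := by
          rw [← Finset.mul_sum]
          have hpu := Finset.prod_univ_sum (fun i : ι => univ.image (f i))
            (fun i x => (cnt (f i) x : ℝ) / N)
          rw [← hpu]
          have : ∀ i : ι, ∑ x ∈ univ.image (f i), ((cnt (f i) x : ℝ) / N) = 1 := by
            intro i
            rw [← Finset.sum_div]
            rw [show ∑ x ∈ univ.image (f i), (cnt (f i) x : ℝ) = N by
              rw [hNdef]; exact_mod_cast congrArg Nat.cast (sum_cnt (f i))]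
            exact div_self hN.ne'
          simp [this]
  have hlog : ∀ ω : Ω, Real.log (N / cnt g (g ω)) - Real.log (∏ i, (N / cnt (f i) (f i ω)))
      ≤ W ω - 1 := by
    intro ω
    rw [← Real.log_div (div_pos hN (hcg ω)).ne' (hProdPos ω).ne']
    exact Real.log_le_sub_one_of_pos (hWpos ω)
  have : ∑ ω : Ω, (Real.log (N / cnt g (g ω)) - Real.log (∏ i, (N / cnt (f i) (f i ω))))
      ≤ ∑ ω : Ω, (W ω - 1) := Finset.sum_le_sum fun ω _ => hlog ω
  rw [Finset.sum_sub_distrib, Finset.sum_sub_distrib] at this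
  have h2 : ∑ _ω : Ω, (1:ℝ) = N := by simp [hNdef]
  linarith [key]



lemma exp_add_exp_neg_le {x : ℝ} (hx : |x| ≤ 1) :
    Real.exp x + Real.exp (-x) ≤ 2 * Real.exp (x ^ 2) := by
  have h1 := Real.exp_bound hx (n := 2) two_pos
  have h2 := Real.exp_bound (x := -x) (by rwa [abs_neg]) (n := 2) two_pos
  rw [show (Finset.range 2) = {0, 1} by rfl] at h1 h2
  simp only [Finset.sum_insert, Finset.mem_singleton, Finset.sum_singleton,
    pow_zero, pow_one, Nat.factorial] at h1 h2
  norm_num at h1 h2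
  have hexp : 1 + x ^ 2 ≤ Real.exp (x ^ 2) := by
    have := Real.add_one_le_exp (x ^ 2); linarith
  rw [abs_le] at h1 h2
  nlinarith [h1.2, h2.2, hexp]

variable {α : Type*} [Fintype α] [DecidableEq α]

def sgn (b : Bool) : ℝ := if b then 1 else -1

lemma abs_sgn (b : Bool) : |sgn b| = 1 := by cases b <;> simp [sgn]

def rowSum (a : α → ℝ) (ω : α → Bool) : ℝ := ∑ j, a j * sgn (ω j)

lemma abs_rowSum_le {a : α → ℝ} (ha : ∀ j, |a j| ≤ 1) (ω : α → Bool) :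
    |rowSum a ω| ≤ Fintype.card α := by
  calc |rowSum a ω| ≤ ∑ j, |a j * sgn (ω j)| := Finset.abs_sum_le_sum_abs _ _
    _ ≤ ∑ _j : α, (1:ℝ) := by
        apply Finset.sum_le_sum
        intro j _
        rw [abs_mul, abs_sgn, mul_one]
        exact ha j
    _ = Fintype.card α := by simp

lemma rowSum_neg (a : α → ℝ) (ω : α → Bool) : rowSum (fun j => -a j) ω = -rowSum a ω := by
  simp [rowSum, Finset.sum_neg_distrib, neg_mul]

lemma mgf_eq (a : α → ℝ) (θ : ℝ) :
    ∑ ω : α → Bool, Real.exp (θ * rowSum a ω)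
      = ∏ j, (Real.exp (θ * a j) + Real.exp (-(θ * a j))) := by
  have h1 : ∀ ω : α → Bool, Real.exp (θ * rowSum a ω)
      = ∏ j, Real.exp (θ * a j * sgn (ω j)) := by
    intro ω
    rw [← Real.exp_sum]
    congr 1
    rw [rowSum, Finset.mul_sum]
    apply Finset.sum_congr rfl
    intro j _; ring
  simp only [h1]
  have h2 := Finset.prod_univ_sum (fun _ : α => (univ : Finset Bool))
    (fun j b => Real.exp (θ * a j * sgn b))
  rw [Fintype.piFinset_univ] at h2
  rw [← h2]
  apply Finset.prod_congr rfl
  intro j _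
  rw [Fintype.sum_bool]
  simp [sgn, mul_one, mul_neg_one]

theorem count_ge_le (a : α → ℝ) (ha : ∀ j, |a j| ≤ 1) {s : ℝ} (hs : 0 ≤ s)
    (hk : 0 < Fintype.card α) (hsk : s ≤ 2 * Fintype.card α) :
    (#(univ.filter fun ω : α → Bool => s ≤ rowSum a ω) : ℝ)
      ≤ (2:ℝ) ^ (Fintype.card α) * Real.exp (-(s ^ 2) / (4 * Fintype.card α)) := by
  set k : ℕ := Fintype.card α with hkdef
  have hkR : (0:ℝ) < k := by exact_mod_cast hk
  set θ : ℝ := s / (2 * k) with hθdef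
  have hθ0 : 0 ≤ θ := by positivity
  have hθ1 : θ ≤ 1 := by
    rw [hθdef, div_le_one (by positivity)]; linarith
  have key : (#(univ.filter fun ω : α → Bool => s ≤ rowSum a ω) : ℝ) * Real.exp (θ * s)
      ≤ (2:ℝ) ^ k * Real.exp (θ ^ 2 * k) := by
    calc (#(univ.filter fun ω : α → Bool => s ≤ rowSum a ω) : ℝ) * Real.exp (θ * s)
        = ∑ _ω ∈ univ.filter fun ω : α → Bool => s ≤ rowSum a ω, Real.exp (θ * s) := by
          rw [Finset.sum_const, nsmul_eq_mul]
      _ ≤ ∑ ω ∈ univ.filter fun ω : α → Bool => s ≤ rowSum a ω, Real.exp (θ * rowSum a ω) := by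
          apply Finset.sum_le_sum
          intro ω hω
          rw [Finset.mem_filter] at hω
          exact Real.exp_le_exp.2 (mul_le_mul_of_nonneg_left hω.2 hθ0)
      _ ≤ ∑ ω : α → Bool, Real.exp (θ * rowSum a ω) := by
          apply Finset.sum_le_sum_of_subset_of_nonneg (Finset.filter_subset _ _)
          intro ω _ _; positivity
      _ = ∏ j, (Real.exp (θ * a j) + Real.exp (-(θ * a j))) := mgf_eq a θ
      _ ≤ ∏ _j : α, 2 * Real.exp (θ ^ 2) := by
          apply Finset.prod_le_prod
          · intro j _; positivity
          · intro j _
            have h1 : |θ * a j| ≤ 1 := by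
              rw [abs_mul, abs_of_nonneg hθ0]
              calc θ * |a j| ≤ 1 * 1 := mul_le_mul hθ1 (ha j) (abs_nonneg _) one_pos.le
                _ = 1 := one_mul 1
            calc Real.exp (θ * a j) + Real.exp (-(θ * a j))
                ≤ 2 * Real.exp ((θ * a j) ^ 2) := exp_add_exp_neg_le h1
              _ ≤ 2 * Real.exp (θ ^ 2) := by
                  apply mul_le_mul_of_nonneg_left _ two_pos.le
                  apply Real.exp_le_exp.2
                  rw [mul_pow]
                  calc θ ^ 2 * a j ^ 2 ≤ θ ^ 2 * 1 := by
                        apply mul_le_mul_of_nonneg_left _ (sq_nonneg θ)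
                        rw [← sq_abs]
                        nlinarith [ha j, abs_nonneg (a j)]
                    _ = θ ^ 2 := mul_one _
      _ = (2:ℝ) ^ k * Real.exp (θ ^ 2) ^ k := by
          rw [Finset.prod_const, mul_pow]; rfl
      _ = (2:ℝ) ^ k * Real.exp (θ ^ 2 * k) := by
          rw [← Real.exp_nat_mul, mul_comm (k:ℝ)]
  have hexp : Real.exp (θ ^ 2 * k) / Real.exp (θ * s) = Real.exp (-(s ^ 2) / (4 * k)) := by
    rw [← Real.exp_sub]
    congr 1
    rw [hθdef]
    field_simp
    ring
  rw [← hexp, div_eq_mul_inv, ← mul_assoc]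
  rw [← le_div_iff₀ (Real.exp_pos (θ * s))] at key
  rw [div_eq_mul_inv] at key
  exact key

theorem count_abs_ge_le (a : α → ℝ) (ha : ∀ j, |a j| ≤ 1) {s : ℝ} (hs : 0 ≤ s)
    (hk : 0 < Fintype.card α) (hsk : s ≤ 2 * Fintype.card α) :
    (#(univ.filter fun ω : α → Bool => s ≤ |rowSum a ω|) : ℝ)
      ≤ 2 * (2:ℝ) ^ (Fintype.card α) * Real.exp (-(s ^ 2) / (4 * Fintype.card α)) := by
  have hsub : (univ.filter fun ω : α → Bool => s ≤ |rowSum a ω|)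
      ⊆ (univ.filter fun ω : α → Bool => s ≤ rowSum a ω)
        ∪ (univ.filter fun ω : α → Bool => s ≤ rowSum (fun j => -a j) ω) := by
    intro ω hω
    rw [Finset.mem_filter] at hω
    rw [Finset.mem_union, Finset.mem_filter, Finset.mem_filter]
    rcases abs_cases (rowSum a ω) with ⟨heq, -⟩ | ⟨heq, -⟩
    · left; exact ⟨mem_univ ω, by rw [← heq]; exact hω.2⟩
    · right
      refine ⟨mem_univ ω, ?_⟩
      rw [rowSum_neg, ← heq]
      exact hω.2
  have hb := count_ge_le a ha hs hk hsk
  have hb2 := count_ge_le (fun j => -a j) (fun j => by rw [abs_neg]; exact ha j) hs hk hsk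
  calc (#(univ.filter fun ω : α → Bool => s ≤ |rowSum a ω|) : ℝ)
      ≤ (#((univ.filter fun ω : α → Bool => s ≤ rowSum a ω)
          ∪ (univ.filter fun ω : α → Bool => s ≤ rowSum (fun j => -a j) ω)) : ℝ) := by
        exact_mod_cast Finset.card_le_card hsub
    _ ≤ (#(univ.filter fun ω : α → Bool => s ≤ rowSum a ω) : ℝ)
        + #(univ.filter fun ω : α → Bool => s ≤ rowSum (fun j => -a j) ω) := by
        exact_mod_cast Finset.card_union_le _ _
    _ ≤ 2 * (2:ℝ) ^ (Fintype.card α) * Real.exp (-(s ^ 2) / (4 * Fintype.card α)) := by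
        rw [two_mul, add_mul]
        exact add_le_add hb hb2

lemma ent_eq_sum_image (f : Ω → β) :
    ent f = ∑ b ∈ univ.image f,
      ((cnt f b : ℝ) / Fintype.card Ω) * Real.log ((Fintype.card Ω : ℝ) / cnt f b) := by
  rw [ent, Finset.sum_comp (fun b => Real.log ((Fintype.card Ω : ℝ) / cnt f b)) f,
    Finset.sum_div]
  apply Finset.sum_congr rfl
  intro b _
  rw [nsmul_eq_mul, mul_div_right_comm]
  rfl

/-- partial geometric sum bound -/
lemma geom_tail_le {x : ℝ} (h0 : 0 ≤ x) (h1 : x < 1) (n : ℕ) :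
    ∑ i ∈ Finset.range n, x ^ i ≤ 1 / (1 - x) := by
  have hx : (0:ℝ) < 1 - x := by linarith
  rw [geom_sum_eq (ne_of_lt h1)]
  rw [show (x ^ n - 1) / (x - 1) = (1 - x ^ n) / (1 - x) by
    rw [← neg_div_neg_eq]; ring_nf]
  exact div_le_div_of_nonneg_right (by nlinarith [pow_nonneg h0 n]) hx.le

lemma sum_pow_natAbs_le_of_injOn {S : Finset ℤ} (h0 : ∀ b ∈ S, b ≠ 0)
    (hinj : ∀ b ∈ S, ∀ b' ∈ S, b.natAbs = b'.natAbs → b = b')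
    {r : ℝ} (hr0 : 0 ≤ r) (hr1 : r < 1) :
    ∑ b ∈ S, r ^ (2 * b.natAbs - 1) ≤ r / (1 - r ^ 2) := by
  have him : ∑ b ∈ S, r ^ (2 * b.natAbs - 1)
      = ∑ a ∈ S.image Int.natAbs, r ^ (2 * a - 1) :=
      (Finset.sum_image (f := fun a => r ^ (2 * a - 1)) hinj).symm
  rw [him]
  set B : ℕ := S.sup Int.natAbs with hB
  have hsub : S.image Int.natAbs ⊆ Finset.Icc 1 B := by
    intro a ha
    obtain ⟨b, hb, rfl⟩ := mem_image.1 ha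
    rw [Finset.mem_Icc]
    constructor
    · exact Nat.one_le_iff_ne_zero.2 (fun h => h0 b hb (Int.natAbs_eq_zero.1 h))
    · exact Finset.le_sup hb
  calc ∑ a ∈ S.image Int.natAbs, r ^ (2 * a - 1)
      ≤ ∑ a ∈ Finset.Icc 1 B, r ^ (2 * a - 1) := by
        apply Finset.sum_le_sum_of_subset_of_nonneg hsub
        intro a _ _; positivity
    _ = ∑ j ∈ Finset.range B, r ^ (2 * (1 + j) - 1) := by
        rw [show Finset.Icc 1 B = Finset.Ico 1 (B + 1) by
          rw [Finset.Ico_add_one_right_eq_Icc]]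
        rw [Finset.sum_Ico_eq_sum_range]
        simp [add_comm]
    _ = ∑ j ∈ Finset.range B, r * (r ^ 2) ^ j := by
        apply Finset.sum_congr rfl
        intro j _
        rw [← pow_mul, ← pow_succ']
        congr 1
        omega
    _ = r * ∑ j ∈ Finset.range B, (r ^ 2) ^ j := by rw [Finset.mul_sum]
    _ ≤ r * (1 / (1 - r ^ 2)) := by
        apply mul_le_mul_of_nonneg_left _ hr0
        exact geom_tail_le (by positivity) (by nlinarith) B
    _ = r / (1 - r ^ 2) := by rw [mul_one_div]

lemma sum_pow_natAbs_le {T : Finset ℤ} (h0 : (0:ℤ) ∉ T)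
    {r : ℝ} (hr0 : 0 ≤ r) (hr1 : r < 1) :
    ∑ b ∈ T, r ^ (2 * b.natAbs - 1) ≤ 2 * (r / (1 - r ^ 2)) := by
  rw [← Finset.sum_filter_add_sum_filter_not T (fun b => 0 < b), two_mul]
  apply add_le_add
  · apply sum_pow_natAbs_le_of_injOn
    · intro b hb
      rw [Finset.mem_filter] at hb; omega
    · intro b hb b' hb' hab
      rw [Finset.mem_filter] at hb hb'; omega
    · exact hr0
    · exact hr1
  · apply sum_pow_natAbs_le_of_injOn
    · intro b hb
      rw [Finset.mem_filter] at hb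
      intro h; exact h0 (h ▸ hb.1)
    · intro b hb b' hb' hab
      rw [Finset.mem_filter] at hb hb'
      have hb0 : b ≠ 0 := fun h => h0 (h ▸ hb.1)
      have hb'0 : b' ≠ 0 := fun h => h0 (h ▸ hb'.1)
      omega
    · exact hr0
    · exact hr1

/-- key per-coordinate entropy estimate from fiber count bounds. -/
lemma ent_le_of_counts [Nonempty Ω] (f : Ω → ℤ) {r : ℝ}
    (hr0 : 0 < r) (hr1 : r ≤ 1 / 200)
    (h0 : (Fintype.card Ω : ℝ) - cnt f 0 ≤ 2 * r ^ 2 * Fintype.card Ω)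
    (hb : ∀ b : ℤ, b ≠ 0 → b ∈ univ.image f →
      (cnt f b : ℝ) ≤ 2 * (Fintype.card Ω : ℝ) * r ^ (4 * b.natAbs - 2)) :
    ent f ≤ 6 * r := by
  classical
  have hN : (0:ℝ) < Fintype.card Ω := by exact_mod_cast Fintype.card_pos
  set N : ℝ := (Fintype.card Ω : ℝ) with hNdef
  rw [ent_eq_sum_image]
  -- term bounds
  have hterm : ∀ b ∈ univ.image f, b ≠ (0:ℤ) →
      ((cnt f b : ℝ) / N) * Real.log (N / cnt f b)
        ≤ 2 * Real.sqrt 2 * r ^ (2 * b.natAbs - 1) := by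
    intro b hbim hb0
    have hc : (0:ℝ) < cnt f b := by exact_mod_cast cnt_pos_of_mem_image f hbim
    set q : ℝ := Real.sqrt ((cnt f b : ℝ) / N) with hq
    have hqpos : 0 < q := Real.sqrt_pos.2 (by positivity)
    have hq2 : q ^ 2 = (cnt f b : ℝ) / N := Real.sq_sqrt (by positivity)
    have hlogq : Real.log (N / cnt f b) = -(2 * Real.log q) := by
      have h1 : (N : ℝ) / cnt f b = (((cnt f b : ℝ)) / N)⁻¹ := by rw [inv_div]
      rw [h1, Real.log_inv, ← hq2, show q ^ 2 = q * q by ring,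
        Real.log_mul hqpos.ne' hqpos.ne']
      ring
    have hlogle : -Real.log q ≤ 1 / q := by
      have := Real.log_le_sub_one_of_pos (show (0:ℝ) < 1/q by positivity)
      rw [Real.log_div one_ne_zero hqpos.ne', Real.log_one] at this
      linarith
    have hstep : ((cnt f b : ℝ) / N) * Real.log (N / cnt f b) ≤ 2 * q := by
      rw [← hq2, hlogq]
      calc q ^ 2 * -(2 * Real.log q) = (2 * q) * (q * -Real.log q) := by ring
        _ ≤ (2 * q) * (q * (1/q)) := by
            apply mul_le_mul_of_nonneg_left _ (by positivity)
            exact mul_le_mul_of_nonneg_left hlogle hqpos.le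
        _ = 2 * q := by field_simp
    refine hstep.trans ?_
    have hqle : q ≤ Real.sqrt 2 * r ^ (2 * b.natAbs - 1) := by
      have h1 : (cnt f b : ℝ) / N ≤ 2 * r ^ (4 * b.natAbs - 2) := by
        rw [div_le_iff₀ hN]
        calc (cnt f b : ℝ) ≤ 2 * N * r ^ (4 * b.natAbs - 2) := hb b hb0 hbim
          _ = 2 * r ^ (4 * b.natAbs - 2) * N := by ring
      calc q ≤ Real.sqrt (2 * r ^ (4 * b.natAbs - 2)) := Real.sqrt_le_sqrt h1
        _ = Real.sqrt 2 * r ^ (2 * b.natAbs - 1) := by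
            rw [Real.sqrt_mul (by norm_num)]
            congr 1
            rw [show 4 * b.natAbs - 2 = (2 * b.natAbs - 1) * 2 by omega]
            rw [pow_mul]
            exact Real.sqrt_sq (by positivity)
    linarith [hqle]
  -- split off the zero bucket
  by_cases h0im : (0:ℤ) ∈ univ.image f
  · rw [← Finset.sum_erase_add _ _ h0im]
    have hzero : ((cnt f 0 : ℝ) / N) * Real.log (N / cnt f 0) ≤ 2 * r ^ 2 := by
      have hc : (0:ℝ) < cnt f 0 := by exact_mod_cast cnt_pos_of_mem_image f h0im
      have hlog := Real.log_le_sub_one_of_pos (show (0:ℝ) < N / cnt f 0 by positivity)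
      have hcN : (cnt f 0 : ℝ) ≤ N := by
        rw [hNdef]; exact_mod_cast cnt_le_card f 0
      calc ((cnt f 0 : ℝ) / N) * Real.log (N / cnt f 0)
          ≤ ((cnt f 0 : ℝ) / N) * (N / cnt f 0 - 1) := by
            apply mul_le_mul_of_nonneg_left hlog (by positivity)
        _ = 1 - (cnt f 0 : ℝ) / N := by field_simp
        _ ≤ 2 * r ^ 2 := by
            rw [sub_le_iff_le_add, ← sub_le_iff_le_add']
            calc 1 - 2 * r ^ 2 = (N - 2 * r ^ 2 * N) / N := by field_simp
              _ ≤ (cnt f 0 : ℝ) / N := by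
                  apply div_le_div_of_nonneg_right _ hN.le
                  linarith [h0]
    have htail : ∑ b ∈ (univ.image f).erase 0,
        ((cnt f b : ℝ) / N) * Real.log (N / cnt f b)
          ≤ 2 * Real.sqrt 2 * (2 * (r / (1 - r ^ 2))) := by
      calc ∑ b ∈ (univ.image f).erase 0, ((cnt f b : ℝ) / N) * Real.log (N / cnt f b)
          ≤ ∑ b ∈ (univ.image f).erase 0, 2 * Real.sqrt 2 * r ^ (2 * b.natAbs - 1) := by
            apply Finset.sum_le_sum
            intro b hbm
            exact hterm b (Finset.mem_of_mem_erase hbm) (Finset.ne_of_mem_erase hbm)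
        _ = 2 * Real.sqrt 2 * ∑ b ∈ (univ.image f).erase 0, r ^ (2 * b.natAbs - 1) := by
            rw [Finset.mul_sum]
        _ ≤ 2 * Real.sqrt 2 * (2 * (r / (1 - r ^ 2))) := by
            apply mul_le_mul_of_nonneg_left _ (by positivity)
            exact sum_pow_natAbs_le (Finset.notMem_erase _ _) hr0.le (by nlinarith)
    -- numeric assembly
    have hs2 : Real.sqrt 2 ≤ 1.415 := by
      rw [show (2:ℝ) = 1.415^2 - 0.002225 by norm_num]
      calc Real.sqrt (1.415^2 - 0.002225) ≤ Real.sqrt (1.415^2) := by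
            apply Real.sqrt_le_sqrt; norm_num
        _ = 1.415 := Real.sqrt_sq (by norm_num)
    have hrr : r / (1 - r ^ 2) ≤ r * (1.01) := by
      rw [div_le_iff₀ (by nlinarith)]
      nlinarith
    have := htail
    nlinarith [Real.sqrt_nonneg 2, hzero]
  · rw [Finset.sum_congr rfl (fun b hbm => rfl)]
    have : ∀ b ∈ univ.image f, b ≠ (0:ℤ) := by
      intro b hbm h; exact h0im (h ▸ hbm)
    calc ∑ b ∈ univ.image f, ((cnt f b : ℝ) / N) * Real.log (N / cnt f b)
        ≤ ∑ b ∈ univ.image f, 2 * Real.sqrt 2 * r ^ (2 * b.natAbs - 1) :=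
          Finset.sum_le_sum (fun b hbm => hterm b hbm (this b hbm))
      _ = 2 * Real.sqrt 2 * ∑ b ∈ univ.image f, r ^ (2 * b.natAbs - 1) := by
          rw [Finset.mul_sum]
      _ ≤ 2 * Real.sqrt 2 * (2 * (r / (1 - r ^ 2))) := by
          apply mul_le_mul_of_nonneg_left _ (by positivity)
          exact sum_pow_natAbs_le (fun h => this 0 h rfl) hr0.le (by nlinarith)
      _ ≤ 6 * r := by
          have hs2 : Real.sqrt 2 ≤ 1.415 := by
            rw [show (2:ℝ) = 1.415^2 - 0.002225 by norm_num]
            calc Real.sqrt (1.415^2 - 0.002225) ≤ Real.sqrt (1.415^2) := by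
                  apply Real.sqrt_le_sqrt; norm_num
              _ = 1.415 := Real.sqrt_sq (by norm_num)
          have hrr : r / (1 - r ^ 2) ≤ r * (1.01) := by
            rw [div_le_iff₀ (by nlinarith)]
            nlinarith
          nlinarith [Real.sqrt_nonneg 2]



lemma binom_sum_le (k D : ℕ) (hD : (D:ℝ) ≤ (k:ℝ)/5) :
    (∑ d ∈ Finset.range (D+1), (k.choose d : ℝ))
      ≤ (5/4:ℝ)^k * (4:ℝ)^((k:ℝ)/5) := by
  have h4 : (0:ℝ) < (1/4:ℝ) ^ ((k:ℝ)/5) := Real.rpow_pos_of_pos (by norm_num) _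
  have hDk : D ≤ k := by
    by_contra h
    push_neg at h
    have : (k:ℝ) < D := by exact_mod_cast h
    have hk0 : (0:ℝ) ≤ k := Nat.cast_nonneg k
    linarith
  have h1 : (∑ d ∈ Finset.range (D+1), (k.choose d : ℝ)) * (1/4:ℝ)^((k:ℝ)/5)
      ≤ (5/4:ℝ)^k := by
    rw [Finset.sum_mul]
    calc ∑ d ∈ Finset.range (D+1), (k.choose d : ℝ) * (1/4:ℝ)^((k:ℝ)/5)
        ≤ ∑ d ∈ Finset.range (D+1), (k.choose d : ℝ) * (1/4:ℝ)^(d:ℕ) := by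
          apply Finset.sum_le_sum
          intro d hd
          apply mul_le_mul_of_nonneg_left _ (by positivity)
          rw [← Real.rpow_natCast (1/4:ℝ) d]
          apply Real.rpow_le_rpow_of_exponent_ge (by norm_num) (by norm_num)
          have hd' : d ≤ D := by
            rw [Finset.mem_range] at hd; omega
          calc (d:ℝ) ≤ D := by exact_mod_cast hd'
            _ ≤ (k:ℝ)/5 := hD
      _ ≤ ∑ d ∈ Finset.range (k+1), (k.choose d : ℝ) * (1/4:ℝ)^(d:ℕ) := by
          apply Finset.sum_le_sum_of_subset_of_nonneg
          · apply Finset.range_subset_range.2; omega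
          · intro d _ _; positivity
      _ = (5/4:ℝ)^k := by
          have := add_pow (1/4:ℝ) 1 k
          simp only [one_pow, mul_one] at this
          rw [show (5/4:ℝ) = 1/4 + 1 by norm_num, this]
          apply Finset.sum_congr rfl
          intro d _
          ring
  rw [← le_div_iff₀ h4] at h1
  calc (∑ d ∈ Finset.range (D+1), (k.choose d : ℝ))
      ≤ (5/4:ℝ)^k / (1/4:ℝ)^((k:ℝ)/5) := h1
    _ = (5/4:ℝ)^k * (4:ℝ)^((k:ℝ)/5) := by
        rw [div_eq_mul_inv]
        congr 1
        rw [show (1/4:ℝ) = ((4:ℝ))⁻¹ by norm_num, Real.inv_rpow (by norm_num)]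
        rw [inv_inv]

variable {α : Type*} [Fintype α] [DecidableEq α]

lemma exists_far_pair (F : Finset (α → Bool)) (D : ℕ)
    (hF : (∑ d ∈ Finset.range (D+1), ((Fintype.card α).choose d) : ℕ) < F.card) :
    ∃ ω₁ ∈ F, ∃ ω₂ ∈ F, D < #(univ.filter fun j => ω₁ j ≠ ω₂ j) := by
  by_contra hcon
  push_neg at hcon
  have hne : F.Nonempty := by
    rw [← Finset.card_pos]; omega
  obtain ⟨ω₀, hω₀⟩ := hne
  set Φ : (α → Bool) → Finset α := fun ω => univ.filter fun j => ω j ≠ ω₀ j with hΦ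
  set T : Finset (Finset α) :=
    (Finset.range (D+1)).biUnion (fun d => Finset.powersetCard d univ) with hT
  have hmaps : ∀ ω ∈ F, Φ ω ∈ T := by
    intro ω hω
    rw [hT, Finset.mem_biUnion]
    refine ⟨#(Φ ω), ?_, ?_⟩
    · rw [Finset.mem_range]
      have h3 : #(Φ ω) ≤ D := by simpa [hΦ] using hcon ω hω ω₀ hω₀
      omega
    · rw [Finset.mem_powersetCard]
      exact ⟨Finset.subset_univ _, rfl⟩
  have hinj : ∀ ω ∈ F, ∀ ω' ∈ F, Φ ω = Φ ω' → ω = ω' := by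
    intro ω hω ω' hω' heq
    funext j
    by_cases hj : j ∈ Φ ω
    · have hj' : j ∈ Φ ω' := heq ▸ hj
      rw [hΦ, Finset.mem_filter] at hj hj'
      revert hj hj'
      cases ω j <;> cases ω' j <;> cases ω₀ j <;> simp
    · have hj' : j ∉ Φ ω' := heq ▸ hj
      rw [hΦ, Finset.mem_filter] at hj hj'
      push_neg at hj hj'
      have h1 : ω j = ω₀ j := by
        by_contra h
        exact h (hj (Finset.mem_univ j))
      have h2 : ω' j = ω₀ j := by
        by_contra h
        exact h (hj' (Finset.mem_univ j))
      rw [h1, h2]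
  have hcard : F.card ≤ T.card := Finset.card_le_card_of_injOn Φ hmaps hinj
  have hTcard : T.card ≤ ∑ d ∈ Finset.range (D+1), ((Fintype.card α).choose d) := by
    calc T.card ≤ ∑ d ∈ Finset.range (D+1), (Finset.powersetCard d (univ : Finset α)).card :=
          Finset.card_biUnion_le
      _ = ∑ d ∈ Finset.range (D+1), ((Fintype.card α).choose d) := by
          apply Finset.sum_congr rfl
          intro d _
          rw [Finset.card_powersetCard, Finset.card_univ]
  omega


lemma numeric1 {k : ℕ} (hk : 0 < k) :
    (5/4:ℝ)^k * (4:ℝ)^((k:ℝ)/5) < (2:ℝ)^k * Real.exp (-(6/100) * k) := by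
  have l54 : Real.log (5/4) ≤ 1/4 := by
    have := Real.log_le_sub_one_of_pos (show (0:ℝ) < 5/4 by norm_num)
    linarith
  have l2 := Real.log_two_gt_d9
  have hkR : (1:ℝ) ≤ k := by exact_mod_cast hk
  have e54 : (5/4:ℝ)^k = Real.exp ((k:ℝ) * Real.log (5/4)) := by
    rw [Real.exp_nat_mul, Real.exp_log (show (0:ℝ) < 5/4 by norm_num)]
  have e2 : (2:ℝ)^k = Real.exp ((k:ℝ) * Real.log 2) := by
    rw [Real.exp_nat_mul, Real.exp_log (show (0:ℝ) < 2 by norm_num)]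
  have e4 : (4:ℝ)^((k:ℝ)/5) = Real.exp (Real.log 4 * ((k:ℝ)/5)) := by
    rw [Real.rpow_def_of_pos (show (0:ℝ) < 4 by norm_num)]
  have l4 : Real.log 4 = 2 * Real.log 2 := by
    rw [show (4:ℝ) = 2^2 by norm_num, Real.log_pow]
    push_cast; ring
  rw [e54, e2, e4, ← Real.exp_add, ← Real.exp_add, l4]
  apply Real.exp_lt_exp.2
  nlinarith [l54, l2, hkR]

set_option maxHeartbeats 1000000 in
/-- The partial colouring lemma. -/
theorem partial_coloring {α : Type*} [Fintype α] [DecidableEq α] (m : ℕ) (hm : 0 < m)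
    (a : Fin m → α → ℝ) (ha : ∀ i j, |a i j| ≤ 1) (hk : 0 < Fintype.card α) :
    ∃ ω₁ ω₂ : α → Bool,
      (Fintype.card α : ℝ)/5 < #(univ.filter fun j => ω₁ j ≠ ω₂ j) ∧
      ∀ i, |rowSum (a i) ω₁ - rowSum (a i) ω₂|
        ≤ Real.sqrt (32 * (Fintype.card α : ℝ) *
            Real.log (100 * ((m:ℝ)/(Fintype.card α : ℝ) + 2))) := by
  classical
  set k : ℕ := Fintype.card α with hkdef
  set K : ℝ := (k : ℝ) with hKdef
  have hK : (0:ℝ) < K := by rw [hKdef]; exact_mod_cast hk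
  set M : ℝ := (m : ℝ) with hMdef
  have hM : (0:ℝ) < M := by rw [hMdef]; exact_mod_cast hm
  set L0 : ℝ := Real.log (100 * (M/K + 2)) with hL0def
  have hbase : (200:ℝ) ≤ 100 * (M/K + 2) := by
    have : 0 ≤ M/K := by positivity
    linarith
  have hL0 : Real.log 200 ≤ L0 := Real.log_le_log (by norm_num) hbase
  have hL0pos : 0 < L0 := lt_of_lt_of_le (Real.log_pos (by norm_num)) hL0
  set Δ : ℝ := Real.sqrt (32 * K * L0) with hΔdef
  have hΔpos : 0 < Δ := Real.sqrt_pos.2 (by positivity)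
  have hΔsq : Δ^2 = 32 * K * L0 := Real.sq_sqrt (by positivity)
  by_cases hbig : 2 * K ≤ Δ
  · refine ⟨(fun _ => true), (fun _ => false), ?_, ?_⟩
    · have hful : (univ.filter fun _j : α => (true:Bool) ≠ false) = univ := by
        apply Finset.filter_true_of_mem
        intro j _
        simp
      rw [hful, Finset.card_univ, ← hkdef, ← hKdef]
      linarith
    · intro i
      have h1 := abs_rowSum_le (ha i) (fun _ => true)
      have h2 := abs_rowSum_le (ha i) (fun _ => false)
      rw [← hkdef, ← hKdef] at h1 h2
      calc |rowSum (a i) (fun _ => true) - rowSum (a i) (fun _ => false)|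
          ≤ |rowSum (a i) (fun _ => true)| + |rowSum (a i) (fun _ => false)| :=
            abs_sub _ _
        _ ≤ 2 * K := by linarith [abs_nonneg (rowSum (a i) (fun _ => true))]
        _ ≤ Δ := hbig
  push_neg at hbig
  set r : ℝ := Real.exp (-L0) with hrdef
  have hr0 : 0 < r := Real.exp_pos _
  have hrinv : r = (100 * (M/K + 2))⁻¹ := by
    rw [hrdef, Real.exp_neg, hL0def, Real.exp_log (by positivity)]
  have hr1 : r ≤ 1/200 := by
    rw [hrinv, one_div]
    exact inv_anti₀ (by norm_num) hbase
  set f : Fin m → (α → Bool) → ℤ :=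
    fun i ω => ⌊rowSum (a i) ω / Δ + 1/2⌋ with hfdef
  have hcardΩ : (Fintype.card (α → Bool) : ℝ) = 2^k := by
    rw [Fintype.card_fun, Fintype.card_bool]
    push_cast
    rfl
  have hN : (0:ℝ) < (Fintype.card (α → Bool) : ℝ) := by
    rw [hcardΩ]; positivity
  -- entropy bound for each row
  have hent : ∀ i, ent (f i) ≤ 6 * r := by
    intro i
    apply ent_le_of_counts _ hr0 hr1
    · -- central bucket: complement is small
      have hsplit := Finset.card_filter_add_card_filter_not
        (s := (univ : Finset (α → Bool))) (p := fun ω => f i ω = 0)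
      have hsub : (univ.filter fun ω : α → Bool => ¬ (f i ω = 0))
          ⊆ (univ.filter fun ω : α → Bool => Δ/2 ≤ |rowSum (a i) ω|) := by
        intro ω hω
        rw [Finset.mem_filter] at hω ⊢
        refine ⟨mem_univ ω, ?_⟩
        by_contra habs
        push_neg at habs
        apply hω.2
        show (⌊rowSum (a i) ω / Δ + 1/2⌋ : ℤ) = 0
        apply Int.floor_eq_zero_iff.2
        have habs' : |rowSum (a i) ω / Δ| < 1/2 := by
          rw [abs_div, abs_of_pos hΔpos, div_lt_iff₀ hΔpos]
          linarith
        rw [abs_lt] at habs'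
        constructor
        · linarith [habs'.1]
        · have : rowSum (a i) ω / Δ + 1/2 < 1 := by linarith [habs'.2]
          exact this
      have hhoef := count_abs_ge_le (a i) (ha i) (s := Δ/2) (by positivity)
        hk (by rw [← hkdef, ← hKdef]; linarith)
      have hcount : ((univ.filter fun ω : α → Bool => ¬ (f i ω = 0)).card : ℝ)
          ≤ 2 * (Fintype.card (α → Bool) : ℝ) * r^2 := by
        calc ((univ.filter fun ω : α → Bool => ¬ (f i ω = 0)).card : ℝ)
            ≤ ((univ.filter fun ω : α → Bool => Δ/2 ≤ |rowSum (a i) ω|).card : ℝ) := by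
              exact_mod_cast Finset.card_le_card hsub
          _ ≤ 2 * (2:ℝ)^(Fintype.card α) * Real.exp (-((Δ/2)^2) / (4 * Fintype.card α)) :=
              hhoef
          _ = 2 * (Fintype.card (α → Bool) : ℝ) * r^2 := by
              rw [hcardΩ, ← hkdef]
              congr 1
              have harg : -((Δ/2)^2) / (4 * K) = -(2 * L0) := by
                rw [div_pow, hΔsq]
                field_simp
                ring
              rw [← hKdef, harg, hrdef, ← Real.exp_nat_mul]
              congr 1
              push_cast
              ring
      rw [Finset.card_univ] at hsplit
      have hcast : ((Fintype.card (α → Bool)):ℝ) - (cnt (f i) 0 : ℝ)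
          = ((univ.filter fun ω : α → Bool => ¬ (f i ω = 0)).card : ℝ) := by
        have hc := hsplit
        have : (cnt (f i) 0 : ℝ)
            = ((univ.filter fun ω : α → Bool => f i ω = 0).card : ℝ) := rfl
        rw [this]
        have := congrArg (fun x : ℕ => (x:ℝ)) hc
        push_cast at this
        linarith
      rw [hcast]
      linarith [hcount]
    · -- other buckets
      intro b hb0 hbim
      set nb : ℝ := (b.natAbs : ℝ) with hnbdef
      have hnb1 : (1:ℝ) ≤ nb := by
        rw [hnbdef]
        exact_mod_cast Nat.one_le_iff_ne_zero.2 (Int.natAbs_ne_zero.2 hb0)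
      set s : ℝ := (nb - 1/2) * Δ with hsdef
      have hs0 : 0 ≤ s := by
        apply mul_nonneg _ hΔpos.le
        linarith
      have hsub : (univ.filter fun ω : α → Bool => f i ω = b)
          ⊆ (univ.filter fun ω : α → Bool => s ≤ |rowSum (a i) ω|) := by
        intro ω hω
        rw [Finset.mem_filter] at hω ⊢
        refine ⟨mem_univ ω, ?_⟩
        have hfl : (b:ℝ) ≤ rowSum (a i) ω / Δ + 1/2 ∧
            rowSum (a i) ω / Δ + 1/2 < b + 1 := by
          constructor
          · exact_mod_cast (Int.floor_eq_iff.1 hω.2).1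
          · exact_mod_cast (Int.floor_eq_iff.1 hω.2).2
        rcases lt_or_gt_of_ne hb0 with hneg | hpos
        · -- b ≤ -1
          have hnbeq : (b:ℝ) = -nb := by
            rw [hnbdef, Nat.cast_natAbs, abs_of_neg hneg]
            push_cast
            ring
          have h2 : rowSum (a i) ω / Δ < -(nb - 1/2) := by
            have h3 := hfl.2
            rw [hnbeq] at h3
            linarith
          have h3 : rowSum (a i) ω < -((nb - 1/2) * Δ) := by
            have h4 := (div_lt_iff₀ hΔpos).1 h2
            nlinarith
          rw [le_abs]
          right
          rw [hsdef]
          linarith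
        · -- b ≥ 1
          have hnbeq : (b:ℝ) = nb := by
            rw [hnbdef, Nat.cast_natAbs, abs_of_pos hpos]
          have h2 : nb - 1/2 ≤ rowSum (a i) ω / Δ := by
            have h3 := hfl.1
            rw [hnbeq] at h3
            linarith
          rw [le_abs]
          left
          rw [hsdef]
          calc (nb - 1/2) * Δ ≤ (rowSum (a i) ω / Δ) * Δ := by
                apply mul_le_mul_of_nonneg_right h2 hΔpos.le
            _ = rowSum (a i) ω := by field_simp
      have hsK : s ≤ 2 * (Fintype.card α : ℝ) := by
        obtain ⟨ω₀, hω₀, hfω₀⟩ := Finset.mem_image.1 hbim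
        have hmem : ω₀ ∈ (univ.filter fun ω : α → Bool => f i ω = b) := by
          rw [Finset.mem_filter]; exact ⟨mem_univ _, hfω₀⟩
        have := hsub hmem
        rw [Finset.mem_filter] at this
        calc s ≤ |rowSum (a i) ω₀| := this.2
          _ ≤ (Fintype.card α : ℝ) := abs_rowSum_le (ha i) ω₀
          _ ≤ 2 * (Fintype.card α : ℝ) := by
              rw [← hkdef, ← hKdef]; linarith
      have hhoef := count_abs_ge_le (a i) (ha i) hs0 hk hsK
      calc (cnt (f i) b : ℝ)
          ≤ ((univ.filter fun ω : α → Bool => s ≤ |rowSum (a i) ω|).card : ℝ) := by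
            exact_mod_cast Finset.card_le_card hsub
        _ ≤ 2 * (2:ℝ)^(Fintype.card α) * Real.exp (-(s^2) / (4 * Fintype.card α)) := hhoef
        _ ≤ 2 * (Fintype.card (α → Bool) : ℝ) * r ^ (4 * b.natAbs - 2) := by
            rw [hcardΩ, ← hkdef]
            apply mul_le_mul_of_nonneg_left _ (by positivity)
            have hcast : (((4 * b.natAbs - 2 : ℕ)) : ℝ) = 4 * nb - 2 := by
              have h1 : 1 ≤ b.natAbs := Nat.one_le_iff_ne_zero.2 (Int.natAbs_ne_zero.2 hb0)
              rw [hnbdef]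
              push_cast [Nat.cast_sub (by omega : 2 ≤ 4 * b.natAbs)]
              ring
            rw [hrdef, ← Real.exp_nat_mul, hcast]
            apply Real.exp_le_exp.2
            rw [hsdef, mul_pow, hΔsq, ← hKdef]
            have hexpand : -((nb - 1/2)^2 * (32 * K * L0)) / (4 * K)
                = -(8 * (nb - 1/2)^2 * L0) := by
              field_simp
              ring
            rw [hexpand]
            nlinarith [hL0pos, hnb1,
              mul_nonneg (mul_nonneg (by linarith : (0:ℝ) ≤ 2*nb-1)
                (by linarith : (0:ℝ) ≤ nb-1)) hL0pos.le]
  -- joint bucket map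
  set g : (α → Bool) → (Fin m → ℤ) := fun ω i => f i ω with hgdef
  have hjoint : ent g ≤ (6/100) * K := by
    calc ent g ≤ ∑ i, ent (f i) := ent_joint_le f
      _ ≤ ∑ _i : Fin m, 6 * r := Finset.sum_le_sum (fun i _ => hent i)
      _ = M * (6 * r) := by
          rw [Finset.sum_const, Finset.card_univ, nsmul_eq_mul, Fintype.card_fin, hMdef]
      _ ≤ (6/100) * K := by
          have hrM : r ≤ K / (100 * M) := by
            have hKM : K / (100 * M) = (100 * (M/K))⁻¹ := by
              rw [show (100:ℝ) * (M/K) = (100*M)/K by ring, inv_div]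
            rw [hrinv, hKM]
            exact inv_anti₀ (by positivity) (by linarith)
          have h6 := mul_le_mul_of_nonneg_left hrM (le_of_lt hM)
          have hMr : M * (K / (100 * M)) = K / 100 := by
            field_simp
          rw [hMr] at h6
          linarith
  -- large fiber
  obtain ⟨b, hbfib⟩ := exists_large_fiber g
  set D : ℕ := k / 5 with hDdef
  have hDle : (D:ℝ) ≤ (k:ℝ)/5 := by
    rw [hDdef]
    exact_mod_cast Nat.cast_div_le
  have hball : (∑ d ∈ Finset.range (D+1), (k.choose d : ℝ)) < cnt g b := by
    calc (∑ d ∈ Finset.range (D+1), (k.choose d : ℝ))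
        ≤ (5/4:ℝ)^k * (4:ℝ)^((k:ℝ)/5) := binom_sum_le k D hDle
      _ < (2:ℝ)^k * Real.exp (-(6/100) * k) := numeric1 hk
      _ ≤ (Fintype.card (α → Bool) : ℝ) * Real.exp (-ent g) := by
          rw [hcardΩ]
          apply mul_le_mul_of_nonneg_left _ (by positivity)
          apply Real.exp_le_exp.2
          rw [← hKdef]
          linarith [hjoint]
      _ ≤ cnt g b := hbfib
  have hballN : (∑ d ∈ Finset.range (D+1), k.choose d) < cnt g b := by
    exact_mod_cast hball
  obtain ⟨ω₁, hω₁, ω₂, hω₂, hfar⟩ :=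
    exists_far_pair (univ.filter fun ω => g ω = b) D (by rw [← hkdef]; exact hballN)
  refine ⟨ω₁, ω₂, ?_, ?_⟩
  · have h5 : k < 5 * (D + 1) := by rw [hDdef]; omega
    have h5R : K < 5 * ((D:ℝ) + 1) := by
      rw [hKdef]; exact_mod_cast h5
    have hd : (D:ℝ) + 1 ≤ (#(univ.filter fun j => ω₁ j ≠ ω₂ j) : ℝ) := by
      exact_mod_cast hfar
    linarith
  · intro i
    have hg12 : f i ω₁ = f i ω₂ := by
      have e1 : g ω₁ = b := (Finset.mem_filter.1 hω₁).2
      have e2 : g ω₂ = b := (Finset.mem_filter.1 hω₂).2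
      exact congrFun (e1.trans e2.symm) i
    have hfl : |(rowSum (a i) ω₁ / Δ + 1/2) - (rowSum (a i) ω₂ / Δ + 1/2)| < 1 := by
      exact Int.abs_sub_lt_one_of_floor_eq_floor hg12
    have heq : rowSum (a i) ω₁ - rowSum (a i) ω₂
        = ((rowSum (a i) ω₁ / Δ + 1/2) - (rowSum (a i) ω₂ / Δ + 1/2)) * Δ := by
      field_simp
      ring
    rw [heq, abs_mul, abs_of_pos hΔpos]
    calc |(rowSum (a i) ω₁ / Δ + 1/2) - (rowSum (a i) ω₂ / Δ + 1/2)| * Δ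
        ≤ 1 * Δ := mul_le_mul_of_nonneg_right hfl.le hΔpos.le
      _ = Δ := one_mul Δ




lemma ratio_le_log {y : ℝ} (hy : 0 ≤ y) : y / (y + 2) ≤ Real.log (y + 2) := by
  rcases le_or_gt y 1 with h1 | h1
  · have hlog : Real.log 2 ≤ Real.log (y + 2) :=
      Real.log_le_log (by norm_num) (by linarith)
    have l2 := Real.log_two_gt_d9
    have hfrac : y / (y + 2) ≤ 1/2 := by
      rw [div_le_iff₀ (by linarith)]
      linarith
    linarith
  · have hlog : Real.log 3 ≤ Real.log (y + 2) :=
      Real.log_le_log (by norm_num) (by linarith)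
    have h3 : (1:ℝ) ≤ Real.log 3 := by
      have he := Real.exp_one_lt_d9
      have h := Real.log_le_log (Real.exp_pos 1)
        (le_of_lt (lt_trans he (show (2.7182818286:ℝ) < 3 by norm_num)))
      rwa [Real.log_exp] at h
    have hfrac : y / (y + 2) ≤ 1 := by
      rw [div_le_one (by linarith)]
      linarith
    linarith

lemma phi_mono {M a b : ℝ} (hM : 0 ≤ M) (ha : 0 < a) (hab : a ≤ b) :
    a * Real.log (M/a + 2) ≤ b * Real.log (M/b + 2) := by
  have hb : 0 < b := lt_of_lt_of_le ha hab
  have hpos1 : (0:ℝ) < M/b + 2 := by positivity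
  have hpos2 : (0:ℝ) < (b*(M+2*a))/(a*(M+2*b)) := by positivity
  have h1 : M/a + 2 = (M/b + 2) * ((b*(M+2*a))/(a*(M+2*b))) := by
    field_simp
  have h2 : Real.log (M/a+2)
      = Real.log (M/b+2) + Real.log ((b*(M+2*a))/(a*(M+2*b))) := by
    rw [h1, Real.log_mul hpos1.ne' hpos2.ne']
  have h3 : (b*(M+2*a))/(a*(M+2*b)) = 1 + M*(b-a)/(a*(M+2*b)) := by
    field_simp
    ring
  have h4 : Real.log ((b*(M+2*a))/(a*(M+2*b))) ≤ M*(b-a)/(a*(M+2*b)) := by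
    rw [h3]
    have hz : (0:ℝ) < 1 + M*(b-a)/(a*(M+2*b)) := by
      have : (0:ℝ) ≤ M*(b-a)/(a*(M+2*b)) := by
        apply div_nonneg (mul_nonneg hM (by linarith)) (by positivity)
      linarith
    have := Real.log_le_sub_one_of_pos hz
    linarith
  have h5 : a * (M*(b-a)/(a*(M+2*b))) = (b-a) * (M/(M+2*b)) := by
    field_simp
  have h6 : M/(M+2*b) = (M/b)/((M/b)+2) := by
    have hd2 : M + 2*b ≠ 0 := by positivity
    field_simp
  have h7 : M/(M+2*b) ≤ Real.log (M/b + 2) := by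
    rw [h6]
    exact ratio_le_log (by positivity)
  have h8 : a * Real.log ((b*(M+2*a))/(a*(M+2*b))) ≤ (b-a) * Real.log (M/b+2) := by
    calc a * Real.log ((b*(M+2*a))/(a*(M+2*b)))
        ≤ a * (M*(b-a)/(a*(M+2*b))) := mul_le_mul_of_nonneg_left h4 ha.le
      _ = (b-a) * (M/(M+2*b)) := h5
      _ ≤ (b-a) * Real.log (M/b+2) := mul_le_mul_of_nonneg_left h7 (by linarith)
  calc a * Real.log (M/a+2) = a * Real.log (M/b+2)
        + a * Real.log ((b*(M+2*a))/(a*(M+2*b))) := by rw [h2]; ring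
    _ ≤ a * Real.log (M/b+2) + (b-a) * Real.log (M/b+2) := by linarith
    _ = b * Real.log (M/b+2) := by ring

/-- The potential step inequality. -/
lemma potential_step {M K K' : ℝ} (hM : 0 ≤ M) (hK : 1 ≤ K) (hK' : 0 ≤ K')
    (hlt : K' ≤ (4/5) * K) :
    8 * Real.sqrt (K * Real.log (M/K + 2)) +
      200 * (Real.sqrt (K' * Real.log (M/K' + 2)) + 2 * Real.sqrt K')
    ≤ 200 * (Real.sqrt (K * Real.log (M/K + 2)) + 2 * Real.sqrt K) := by
  have hK0 : (0:ℝ) < K := by linarith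
  set L : ℝ := Real.log (M/K + 2) with hLdef
  have hL2 : Real.log 2 ≤ L := by
    apply Real.log_le_log (by norm_num)
    have : 0 ≤ M/K := by positivity
    linarith
  have hLpos : 0 < L := lt_of_lt_of_le (Real.log_pos (by norm_num)) hL2
  set u : ℝ := Real.sqrt K with hudef
  set v : ℝ := Real.sqrt L with hvdef
  have hu0 : 0 < u := Real.sqrt_pos.2 hK0
  have hv0 : 0 < v := Real.sqrt_pos.2 hLpos
  have hvlb : 0.832 ≤ v := by
    rw [hvdef]
    have l2 := Real.log_two_gt_d9
    have h1 : (0.832:ℝ)^2 ≤ L := by nlinarith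
    calc (0.832:ℝ) = Real.sqrt ((0.832:ℝ)^2) := (Real.sqrt_sq (by norm_num)).symm
      _ ≤ Real.sqrt L := Real.sqrt_le_sqrt h1
  have hKL : Real.sqrt (K * L) = u * v := Real.sqrt_mul hK0.le L
  -- bound for sqrt K'
  have hsK' : Real.sqrt K' ≤ 0.895 * u := by
    calc Real.sqrt K' ≤ Real.sqrt ((4/5) * K) := Real.sqrt_le_sqrt hlt
      _ ≤ Real.sqrt ((0.895)^2 * K) := by
          apply Real.sqrt_le_sqrt
          nlinarith
      _ = 0.895 * u := by
          rw [Real.sqrt_mul (by norm_num), Real.sqrt_sq (by norm_num)]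
  -- bound for sqrt (K' L')
  have hsKL' : Real.sqrt (K' * Real.log (M/K' + 2)) ≤ 0.895 * u * (v + 0.16) := by
    rcases eq_or_lt_of_le hK' with hz | hK'pos
    · rw [← hz]
      simp
      positivity
    · have hphi : K' * Real.log (M/K' + 2) ≤ ((4/5)*K) * Real.log (M/((4/5)*K) + 2) :=
        phi_mono hM hK'pos hlt
      have hlog' : Real.log (M/((4/5)*K) + 2) ≤ L + 1/4 := by
        have harg : M/((4/5)*K) + 2 ≤ (5/4) * (M/K + 2) := by
          rw [show M/((4/5)*K) = (5/4) * (M/K) by field_simp]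
          linarith [div_nonneg hM hK0.le]
        calc Real.log (M/((4/5)*K) + 2) ≤ Real.log ((5/4) * (M/K + 2)) := by
              apply Real.log_le_log (by positivity) harg
          _ = Real.log (5/4) + L := by
              rw [Real.log_mul (by norm_num) (by positivity)]
          _ ≤ L + 1/4 := by
              have := Real.log_le_sub_one_of_pos (show (0:ℝ) < 5/4 by norm_num)
              linarith
      have hsq : (0.895 * u * (v + 0.16))^2 ≥ ((4/5)*K) * (L + 1/4) := by
        have hu2 : u^2 = K := Real.sq_sqrt hK0.le
        have hv2 : v^2 = L := Real.sq_sqrt hLpos.le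
        nlinarith [hvlb, hu0.le, hv0.le]
      calc Real.sqrt (K' * Real.log (M/K' + 2))
          ≤ Real.sqrt (((4/5)*K) * (L + 1/4)) := by
            apply Real.sqrt_le_sqrt
            calc K' * Real.log (M/K' + 2) ≤ ((4/5)*K) * Real.log (M/((4/5)*K) + 2) := hphi
              _ ≤ ((4/5)*K) * (L + 1/4) := by
                  apply mul_le_mul_of_nonneg_left hlog' (by linarith)
        _ ≤ Real.sqrt ((0.895 * u * (v + 0.16))^2) := Real.sqrt_le_sqrt (by linarith [hsq])
        _ = 0.895 * u * (v + 0.16) := Real.sqrt_sq (by positivity)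
  rw [hKL]
  nlinarith [hsK', hsKL', hu0.le, hv0.le, hvlb, mul_pos hu0 hv0]


set_option maxHeartbeats 1000000 in
lemma spencer_ind (m n : ℕ) (hm : 0 < m) (A : Matrix (Fin m) (Fin n) ℝ)
    (hA : ∀ i j, |A i j| ≤ 1) :
    ∀ (k : ℕ) (S : Finset (Fin n)), S.card = k →
    ∃ v : Fin n → ℝ, (∀ j ∈ S, v j = 1 ∨ v j = -1) ∧ (∀ j, j ∉ S → v j = 0) ∧
      ∀ i, |∑ j ∈ S, A i j * v j| ≤
        200 * (Real.sqrt ((k:ℝ) * Real.log ((m:ℝ)/(k:ℝ) + 2)) + 2 * Real.sqrt (k:ℝ)) := by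
  intro k
  induction k using Nat.strong_induction_on with
  | _ k IH =>
  intro S hS
  classical
  by_cases hk0 : k = 0
  · subst hk0
    have hSe : S = ∅ := Finset.card_eq_zero.1 hS
    refine ⟨fun _ => 0, ?_, ?_, ?_⟩
    · intro j hj; rw [hSe] at hj; exact absurd hj (Finset.notMem_empty j)
    · intro j _; rfl
    · intro i
      rw [hSe]
      simp only [Finset.sum_empty, abs_zero]
      positivity
  have hkpos : 0 < k := Nat.pos_of_ne_zero hk0
  have hkR : (1:ℝ) ≤ (k:ℝ) := by exact_mod_cast hkpos
  have hScard : Fintype.card ↥S = k := by rw [Fintype.card_coe, hS]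
  have hcardpos : 0 < Fintype.card ↥S := by rw [hScard]; exact hkpos
  obtain ⟨ω₁, ω₂, hfar, hrows⟩ :=
    partial_coloring (α := ↥S) m hm (fun i j => A i j.1) (fun i j => hA i j.1) hcardpos
  rw [hScard] at hfar hrows
  set x : Fin n → ℝ :=
    fun j => if h : j ∈ S then (sgn (ω₁ ⟨j, h⟩) - sgn (ω₂ ⟨j, h⟩)) / 2 else 0 with hxdef
  set S' : Finset (Fin n) := S.filter (fun j => x j = 0) with hS'def
  have hsubS : S' ⊆ S := Finset.filter_subset _ _
  have hx0 : ∀ (j : Fin n) (h : j ∈ S), (x j = 0 ↔ ω₁ ⟨j, h⟩ = ω₂ ⟨j, h⟩) := by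
    intro j h
    rw [hxdef]
    simp only [dif_pos h]
    cases hb1 : ω₁ ⟨j, h⟩ <;> cases hb2 : ω₂ ⟨j, h⟩ <;> simp [sgn] <;> norm_num
  have hcomp := Finset.card_filter_add_card_filter_not
    (s := (univ : Finset ↥S)) (p := fun j => ω₁ j ≠ ω₂ j)
  rw [Finset.card_univ, hScard] at hcomp
  set d : ℕ := #(univ.filter fun j : ↥S => ω₁ j ≠ ω₂ j) with hddef
  have hS'card : S'.card = #(univ.filter fun j : ↥S => ¬ (ω₁ j ≠ ω₂ j)) := by
    apply Finset.card_bij (fun (j : Fin n) (hj : j ∈ S') => (⟨j, hsubS hj⟩ : ↥S))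
    · intro j hj
      rw [Finset.mem_filter]
      refine ⟨Finset.mem_univ _, ?_⟩
      intro hne
      exact hne ((hx0 j (hsubS hj)).1 (Finset.mem_filter.1 hj).2)
    · intro j1 hj1 j2 hj2 he
      exact congrArg Subtype.val he
    · intro b hb
      rw [Finset.mem_filter] at hb
      push_neg at hb
      refine ⟨b.1, ?_, rfl⟩
      rw [hS'def, Finset.mem_filter]
      exact ⟨b.2, (hx0 b.1 b.2).2 hb.2⟩
  have hsum : S'.card + d = k := by
    rw [hS'card]
    omega
  have hd1 : (k:ℝ)/5 < (d:ℝ) := hfar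
  have hdpos : 0 < d := by
    rcases Nat.eq_zero_or_pos d with h | h
    · rw [h] at hd1
      norm_num at hd1
      exact absurd hd1 (not_lt.2 (by positivity))
    · exact h
  have hS'lt : S'.card < k := by omega
  obtain ⟨v', hv'1, hv'0, hv'bound⟩ := IH S'.card hS'lt S' rfl
  refine ⟨fun j => x j + v' j, ?_, ?_, ?_⟩
  · intro j hj
    by_cases hj' : j ∈ S'
    · have hxj : x j = 0 := (Finset.mem_filter.1 hj').2
      rcases hv'1 j hj' with h | h
      · left; simp only; rw [hxj, h]; ring
      · right; simp only; rw [hxj, h]; ring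
    · have hv'j : v' j = 0 := hv'0 j hj'
      have hxne : x j ≠ 0 := by
        intro h0
        exact hj' (by rw [hS'def, Finset.mem_filter]; exact ⟨hj, h0⟩)
      have hne : ω₁ ⟨j, hj⟩ ≠ ω₂ ⟨j, hj⟩ := fun he => hxne ((hx0 j hj).2 he)
      have hxpm : x j = 1 ∨ x j = -1 := by
        rw [hxdef]
        simp only [dif_pos hj]
        revert hne
        cases ω₁ ⟨j, hj⟩ <;> cases ω₂ ⟨j, hj⟩ <;> intro hne
        · exact absurd rfl hne
        · right; norm_num [sgn]
        · left; norm_num [sgn]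
        · exact absurd rfl hne
      rcases hxpm with h | h
      · left; simp only; rw [h, hv'j]; ring
      · right; simp only; rw [h, hv'j]; ring
  · intro j hj
    have hx : x j = 0 := by rw [hxdef]; exact dif_neg hj
    have hv' : v' j = 0 := hv'0 j (fun hc => hj (hsubS hc))
    simp only
    rw [hx, hv']
    ring
  · intro i
    have h1 : ∑ j ∈ S, A i j * x j
        = ∑ j ∈ S.attach, (A i j.1 * sgn (ω₁ j) - A i j.1 * sgn (ω₂ j)) / 2 := by
      rw [← Finset.sum_attach S (fun j => A i j * x j)]
      apply Finset.sum_congr rfl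
      intro j _
      have hj : (j : Fin n) ∈ S := j.2
      rw [hxdef]
      simp only [dif_pos hj]
      ring
    have h2a : rowSum (fun j : ↥S => A i j.1) ω₁ = ∑ j ∈ S.attach, A i j.1 * sgn (ω₁ j) := by
      rw [rowSum, Finset.univ_eq_attach]
    have h2b : rowSum (fun j : ↥S => A i j.1) ω₂ = ∑ j ∈ S.attach, A i j.1 * sgn (ω₂ j) := by
      rw [rowSum, Finset.univ_eq_attach]
    have hxsum : ∑ j ∈ S, A i j * x j
        = (rowSum (fun j : ↥S => A i j.1) ω₁ - rowSum (fun j : ↥S => A i j.1) ω₂) / 2 := by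
      rw [h1, h2a, h2b, ← Finset.sum_sub_distrib, Finset.sum_div]
    have hsplit : ∑ j ∈ S, A i j * (x j + v' j)
        = (∑ j ∈ S, A i j * x j) + ∑ j ∈ S', A i j * v' j := by
      have h1 : ∑ j ∈ S, A i j * (x j + v' j)
          = (∑ j ∈ S, A i j * x j) + ∑ j ∈ S, A i j * v' j := by
        rw [← Finset.sum_add_distrib]
        apply Finset.sum_congr rfl
        intros
        ring
      have h2 : ∑ j ∈ S, A i j * v' j = ∑ j ∈ S', A i j * v' j := by
        symm
        apply Finset.sum_subset hsubS
        intro j hjS hjn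
        rw [hv'0 j hjn]
        ring
      rw [h1, h2]
    have hb1 : |∑ j ∈ S, A i j * x j|
        ≤ 8 * Real.sqrt ((k:ℝ) * Real.log ((m:ℝ)/(k:ℝ) + 2)) := by
      have h := hrows i
      have hΔle : Real.sqrt (32*(k:ℝ)*Real.log (100*((m:ℝ)/(k:ℝ)+2)))
          ≤ 16 * Real.sqrt ((k:ℝ) * Real.log ((m:ℝ)/(k:ℝ) + 2)) := by
        have hL2 : Real.log 2 ≤ Real.log ((m:ℝ)/(k:ℝ)+2) := by
          apply Real.log_le_log (by norm_num)
          have : (0:ℝ) ≤ (m:ℝ)/(k:ℝ) := by positivity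
          linarith
        have hlog100 : Real.log 100 ≤ 7 * Real.log 2 := by
          calc Real.log 100 ≤ Real.log 128 := Real.log_le_log (by norm_num) (by norm_num)
            _ = 7 * Real.log 2 := by
                rw [show (128:ℝ) = 2^7 by norm_num, Real.log_pow]
                push_cast
                ring
        have hsplitlog : Real.log (100*((m:ℝ)/(k:ℝ)+2))
            = Real.log 100 + Real.log ((m:ℝ)/(k:ℝ)+2) :=
          Real.log_mul (by norm_num) (by positivity)
        have hk0' : (0:ℝ) ≤ (k:ℝ) := by positivity
        have harg : 32*(k:ℝ)*Real.log (100*((m:ℝ)/(k:ℝ)+2))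
            ≤ 256 * ((k:ℝ) * Real.log ((m:ℝ)/(k:ℝ)+2)) := by
          rw [hsplitlog]
          nlinarith [hL2, hlog100, Real.log_two_gt_d9]
        calc Real.sqrt (32*(k:ℝ)*Real.log (100*((m:ℝ)/(k:ℝ)+2)))
            ≤ Real.sqrt (256 * ((k:ℝ) * Real.log ((m:ℝ)/(k:ℝ)+2))) :=
              Real.sqrt_le_sqrt harg
          _ = 16 * Real.sqrt ((k:ℝ) * Real.log ((m:ℝ)/(k:ℝ)+2)) := by
              rw [Real.sqrt_mul (by norm_num), show Real.sqrt (256:ℝ) = 16 by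
                rw [show (256:ℝ) = 16^2 by norm_num]; exact Real.sqrt_sq (by norm_num)]
      rw [hxsum, abs_div, show |(2:ℝ)| = 2 by norm_num]
      rw [div_le_iff₀ (by norm_num : (0:ℝ) < 2)]
      calc |rowSum (fun j : ↥S => A i j.1) ω₁ - rowSum (fun j : ↥S => A i j.1) ω₂|
          ≤ Real.sqrt (32*(k:ℝ)*Real.log (100*((m:ℝ)/(k:ℝ)+2))) := h
        _ ≤ 16 * Real.sqrt ((k:ℝ) * Real.log ((m:ℝ)/(k:ℝ) + 2)) := hΔle
        _ = 8 * Real.sqrt ((k:ℝ) * Real.log ((m:ℝ)/(k:ℝ) + 2)) * 2 := by ring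
    have hb2 := hv'bound i
    have hcast : (S'.card:ℝ) + (d:ℝ) = (k:ℝ) := by exact_mod_cast hsum
    have hpot := potential_step (M := (m:ℝ)) (K := (k:ℝ)) (K' := (S'.card:ℝ))
      (by positivity) hkR (by positivity) (by linarith)
    calc |∑ j ∈ S, A i j * (x j + v' j)|
        ≤ |∑ j ∈ S, A i j * x j| + |∑ j ∈ S', A i j * v' j| := by
          rw [hsplit]
          exact abs_add_le _ _
      _ ≤ 8 * Real.sqrt ((k:ℝ) * Real.log ((m:ℝ)/(k:ℝ) + 2))
          + 200 * (Real.sqrt ((S'.card:ℝ) * Real.log ((m:ℝ)/(S'.card:ℝ) + 2))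
            + 2 * Real.sqrt (S'.card:ℝ)) := add_le_add hb1 hb2
      _ ≤ 200 * (Real.sqrt ((k:ℝ) * Real.log ((m:ℝ)/(k:ℝ) + 2)) + 2 * Real.sqrt (k:ℝ)) := hpot

theorem spencer_matrix_form' :
    ∃ C : ℝ, 0 < C ∧
      ∀ (m n : ℕ), 0 < m → 0 < n →
        ∀ A : Matrix (Fin m) (Fin n) ℝ, (∀ i j, |A i j| ≤ 1) →
          ∃ v : Fin n → ℝ, (∀ j, v j = 1 ∨ v j = -1) ∧
            ∀ i, |A.mulVec v i| ≤
              C * Real.sqrt ((n : ℝ) * Real.log ((m : ℝ) / (n : ℝ) + 2)) := by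
  refine ⟨700, by norm_num, ?_⟩
  intro m n hm hn A hA
  obtain ⟨v, hv1, hv0, hvb⟩ := spencer_ind m n hm A hA n univ (by simp)
  refine ⟨v, fun j => hv1 j (Finset.mem_univ j), ?_⟩
  intro i
  have hmv : A.mulVec v i = ∑ j ∈ univ, A i j * v j := by
    simp [Matrix.mulVec, dotProduct]
  rw [hmv]
  have hvbi := hvb i
  set L : ℝ := Real.log ((m:ℝ)/(n:ℝ) + 2) with hLdef
  have hnR : (0:ℝ) < (n:ℝ) := by exact_mod_cast hn
  have hL2 : Real.log 2 ≤ L := by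
    apply Real.log_le_log (by norm_num)
    have : (0:ℝ) ≤ (m:ℝ)/(n:ℝ) := by positivity
    linarith
  have hLpos : 0 < L := lt_of_lt_of_le (Real.log_pos (by norm_num)) hL2
  have hsplit : Real.sqrt ((n:ℝ) * L) = Real.sqrt (n:ℝ) * Real.sqrt L :=
    Real.sqrt_mul hnR.le L
  have hvlb : 0.832 ≤ Real.sqrt L := by
    have l2 := Real.log_two_gt_d9
    have h1 : (0.832:ℝ)^2 ≤ L := by nlinarith
    calc (0.832:ℝ) = Real.sqrt ((0.832:ℝ)^2) := (Real.sqrt_sq (by norm_num)).symm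
      _ ≤ Real.sqrt L := Real.sqrt_le_sqrt h1
  have hsn : 0 ≤ Real.sqrt (n:ℝ) := Real.sqrt_nonneg _
  calc |∑ j ∈ univ, A i j * v j|
      ≤ 200 * (Real.sqrt ((n:ℝ) * L) + 2 * Real.sqrt (n:ℝ)) := hvbi
    _ ≤ 700 * Real.sqrt ((n:ℝ) * L) := by
        rw [hsplit]
        nlinarith [hvlb, hsn]


end SpencerAux


/-- Matrix form of Spencer's theorem: there is an absolute constant `C > 0` such that for every
matrix `A ∈ ℝ^{m×n}` with all entries of absolute value at most 1, there is a sign vector `v`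
with `‖Av‖_∞ ≤ C √(n log(m/n + 2))`. -/
theorem spencer_matrix_form :
    ∃ C : ℝ, 0 < C ∧
      ∀ (m n : ℕ), 0 < m → 0 < n →
        ∀ A : Matrix (Fin m) (Fin n) ℝ, (∀ i j, |A i j| ≤ 1) →
          ∃ v : Fin n → ℝ, (∀ j, v j = 1 ∨ v j = -1) ∧
            ∀ i, |A.mulVec v i| ≤
              C * Real.sqrt ((n : ℝ) * Real.log ((m : ℝ) / (n : ℝ) + 2)) := by
  exact SpencerAux.spencer_matrix_form'
end

section
/- There exists an absolute constant C > 0 such that the following holds for all positive integers m, n. For every matrix A ∈ ℝ^{m×n} with ‖A‖_{1→∞} ≤ 1 and every diagonal matrix Λ ∈ ℝ^{n×n} with ‖Λ‖_{1→∞} ≤ 1, there exists a vector v ∈ [−1,1]^n such that (i) the number of indices i ∈ [n] with |v_i| = 1 is at least n/C, and (ii) ‖AΛv‖_∞ ≤ C·√(n·log(m/n + 2)). -/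
/-!
Beck's entropy method. Encode a coloring as `χ : [n] → Bool` and round each row sum
`S_i(χ) = ∑_j a_ij (±1)_j` to the nearest multiple of `Δ = 16 √(n log (m/n + 2))`. By
Hoeffding, `round (S_i / Δ)` vanishes except with probability `2 e^{-Δ²/8n}` and has geometric
tails, so its entropy is `O((m/n + 2)^{-16})`; by subadditivity the whole rounding vector has
entropy at most `n/4`. Hence some cell of the rounding contains at least `2^n e^{-n/4}`
colorings, more than a Hamming ball of radius `n/16` holds, so the cell contains two colorings
`χ₁, χ₂` at Hamming distance at least `n/16` whose row sums all differ by at most `Δ`.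
Then `v = (χ₁ - χ₂)/2` is the partial coloring.
-/

open Finset Real

lemma abs_sub_le_one_of_round_eq {x y : ℝ} (h : round x = round y) : |x - y| ≤ 1 := by
  have hx := abs_sub_round x
  have hy := abs_sub_round y
  rw [h] at hx
  linarith [abs_sub_le x (round y : ℝ) y, abs_sub_comm (round y : ℝ) y]

lemma negMulLog_le_two_sqrt {q : ℝ} (hq : 0 ≤ q) : negMulLog q ≤ 2 * √q := by
  have hs := sqrt_nonneg q
  have h := negMulLog_le_one_sub_self hs
  calc negMulLog q = 2 * √q * negMulLog √q := by
        rw [← mul_self_sqrt hq, negMulLog_mul, sqrt_mul_self hs]; ring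
    _ ≤ 2 * √q * (1 - √q) := by gcongr
    _ ≤ 2 * √q := by nlinarith

lemma sum_pow_natAbs_erase_zero_le {ρ : ℝ} (hρ0 : 0 ≤ ρ) (hρ : ρ ≤ 1 / 2)
    (s : Finset ℤ) :
    ∑ k ∈ s.erase 0, ρ ^ k.natAbs ≤ 4 * ρ := by
  have hρ1 : ρ < 1 := by linarith
  have hsum : HasSum (fun k : ℤ => ρ ^ k.natAbs) ((1 - ρ)⁻¹ + ρ * (1 - ρ)⁻¹) := by
    refine HasSum.of_nat_of_neg_add_one ?_ ?_
    · simpa using hasSum_geometric_of_lt_one hρ0 hρ1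
    · have hneg : (fun n : ℕ => ρ ^ (-((n : ℤ) + 1)).natAbs) = fun n => ρ * ρ ^ n := by
        ext n
        rw [Int.natAbs_neg, ← pow_succ']
        rfl
      exact hneg ▸ (hasSum_geometric_of_lt_one hρ0 hρ1).mul_left ρ
  have hle := sum_le_hasSum (insert 0 (s.erase 0)) (fun k _ => by positivity) hsum
  rw [sum_insert (notMem_erase 0 s), Int.natAbs_zero, pow_zero] at hle
  have hinv : (1 - ρ)⁻¹ ≤ 2 := by rw [inv_le_comm₀ (by linarith) two_pos]; linarith
  have hone : (1 - ρ) * (1 - ρ)⁻¹ = 1 := mul_inv_cancel₀ (by linarith)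
  nlinarith

lemma sum_negMulLog_le_of_geometric_tail (s : Finset ℤ) {q : ℤ → ℝ} {ρ : ℝ}
    (hρ0 : 0 ≤ ρ) (hρ : ρ ≤ 1 / 2) (hq : ∀ k, 0 ≤ q k)
    (htail : ∀ k ≠ 0, q k ≤ ρ ^ (2 * k.natAbs)) (hcenter : 1 - 2 * ρ ^ 2 ≤ q 0) :
    ∑ k ∈ s, negMulLog (q k) ≤ 9 * ρ := by
  have hoff : ∑ k ∈ s.erase 0, negMulLog (q k) ≤ 8 * ρ := by
    calc ∑ k ∈ s.erase 0, negMulLog (q k) ≤ ∑ k ∈ s.erase 0, 2 * ρ ^ k.natAbs := by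
          refine sum_le_sum fun k hk => (negMulLog_le_two_sqrt (hq k)).trans ?_
          have : q k ≤ (ρ ^ k.natAbs) ^ 2 := by
            rw [← pow_mul, mul_comm]; exact htail k (ne_of_mem_erase hk)
          have := (sqrt_le_sqrt this).trans_eq (sqrt_sq (by positivity))
          linarith
      _ ≤ 8 * ρ := by
          rw [← mul_sum]; linarith [sum_pow_natAbs_erase_zero_le hρ0 hρ s]
  by_cases h0 : (0 : ℤ) ∈ s
  · rw [← add_sum_erase s _ h0]
    have := negMulLog_le_one_sub_self (hq 0)
    nlinarith
  · rw [← erase_eq_of_notMem h0]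
    linarith

section Entropy

variable {α β : Type*} [Fintype α] [DecidableEq β]

noncomputable def fiberProb (f : α → β) (y : β) : ℝ := #{x | f x = y} / Fintype.card α

/-- The Shannon entropy of `f x` for `x` uniformly distributed on `α`. -/
noncomputable def uniformEntropy (f : α → β) : ℝ :=
  ∑ y ∈ univ.image f, negMulLog (fiberProb f y)

lemma fiberProb_nonneg (f : α → β) (y : β) : 0 ≤ fiberProb f y := by
  unfold fiberProb; positivity

lemma fiberProb_apply_pos (f : α → β) (x : α) : 0 < fiberProb f (f x) := by
  have : Nonempty α := ⟨x⟩
  unfold fiberProb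
  have : 0 < #{x' | f x' = f x} := card_pos.2 ⟨x, by simp⟩
  positivity

lemma sum_image_fiberProb_mul (f : α → β) (φ : β → ℝ) :
    ∑ y ∈ univ.image f, fiberProb f y * φ y = (∑ x, φ (f x)) / Fintype.card α := by
  simp only [sum_comp φ f, nsmul_eq_mul, sum_div, fiberProb]
  exact sum_congr rfl fun y _ => by ring

lemma sum_image_fiberProb [Nonempty α] (f : α → β) :
    ∑ y ∈ univ.image f, fiberProb f y = 1 := by
  simpa using sum_image_fiberProb_mul f 1

lemma uniformEntropy_eq_sum_neg_log (f : α → β) :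
    uniformEntropy f = (∑ x, -log (fiberProb f (f x))) / Fintype.card α := by
  rw [← sum_image_fiberProb_mul f fun y => -log (fiberProb f y), uniformEntropy]
  simp only [negMulLog, neg_mul, mul_neg]

/-- Gibbs' inequality. -/
lemma uniformEntropy_le_of_sum_le_one [Nonempty α] (f : α → β) (Q : β → ℝ)
    (hQ : ∀ x, 0 < Q (f x)) (hQsum : ∑ y ∈ univ.image f, Q y ≤ 1) :
    uniformEntropy f ≤ (∑ x, -log (Q (f x))) / Fintype.card α := by
  have hcard : (0 : ℝ) < Fintype.card α := by exact_mod_cast Fintype.card_pos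
  have hratio :
      (∑ x, Q (f x) / fiberProb f (f x)) / Fintype.card α = ∑ y ∈ univ.image f, Q y := by
    rw [← sum_image_fiberProb_mul f fun y => Q y / fiberProb f y]
    refine sum_congr rfl fun y hy => ?_
    obtain ⟨x, -, rfl⟩ := mem_image.1 hy
    field_simp [(fiberProb_apply_pos f x).ne']
  have hlog : ∀ x, log (Q (f x)) - log (fiberProb f (f x)) ≤ Q (f x) / fiberProb f (f x) - 1 :=
    fun x => by
      rw [← log_div (hQ x).ne' (fiberProb_apply_pos f x).ne']
      exact log_le_sub_one_of_pos (div_pos (hQ x) (fiberProb_apply_pos f x))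
  rw [uniformEntropy_eq_sum_neg_log, div_le_div_iff_of_pos_right hcard, ← sub_nonpos,
    ← sum_sub_distrib]
  calc ∑ x, (-log (fiberProb f (f x)) - -log (Q (f x)))
      ≤ ∑ x, (Q (f x) / fiberProb f (f x) - 1) := sum_le_sum fun x _ => by linarith [hlog x]
    _ = Fintype.card α * (∑ y ∈ univ.image f, Q y - 1) := by
      rw [← hratio, sum_sub_distrib]; field_simp; simp
    _ ≤ 0 := mul_nonpos_of_nonneg_of_nonpos hcard.le (by linarith)

lemma uniformEntropy_pi_le {κ : Type*} [Fintype κ] [Nonempty α] (f : α → κ → β) :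
    uniformEntropy f ≤ ∑ i, uniformEntropy fun x => f x i := by
  classical
  set q : κ → β → ℝ := fun i => fiberProb fun x => f x i
  have hq : ∀ x i, 0 < q i (f x i) := fun x i => fiberProb_apply_pos (fun x => f x i) x
  refine (uniformEntropy_le_of_sum_le_one f (fun y => ∏ i, q i (y i))
    (fun x => prod_pos fun i _ => hq x i) ?_).trans_eq ?_
  · calc ∑ y ∈ univ.image f, ∏ i, q i (y i)
        ≤ ∑ y ∈ Fintype.piFinset fun i => univ.image fun x => f x i, ∏ i, q i (y i) := by
          refine sum_le_sum_of_subset_of_nonneg (fun y hy => ?_) fun y _ _ =>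
            prod_nonneg fun i _ => fiberProb_nonneg _ _
          obtain ⟨x, -, rfl⟩ := mem_image.1 hy
          exact Fintype.mem_piFinset.2 fun i => mem_image_of_mem _ (mem_univ x)
      _ = 1 := by
          rw [← prod_univ_sum]
          exact prod_eq_one fun i _ => sum_image_fiberProb _
  · simp only [uniformEntropy_eq_sum_neg_log, ← sum_div]
    rw [sum_comm]
    refine congrArg (· / _) (sum_congr rfl fun x _ => ?_)
    rw [log_prod fun i _ => (hq x i).ne', ← sum_neg_distrib]

lemma exists_card_fiber_ge_of_uniformEntropy_le [Nonempty α] (f : α → β) {h : ℝ}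
    (hf : uniformEntropy f ≤ h) : ∃ y, Fintype.card α * exp (-h) ≤ #{x | f x = y} := by
  obtain ⟨x₀, -, hx₀⟩ := exists_max_image univ (fun x => fiberProb f (f x)) univ_nonempty
  have hcard : (0 : ℝ) < Fintype.card α := by exact_mod_cast Fintype.card_pos
  have hlog : -log (fiberProb f (f x₀)) ≤ h := by
    refine le_trans ?_ ((uniformEntropy_eq_sum_neg_log f).symm.trans_le hf)
    rw [le_div_iff₀ hcard, mul_comm, ← nsmul_eq_mul, ← card_univ, ← sum_const]
    exact sum_le_sum fun x _ => neg_le_neg <|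
      log_le_log (fiberProb_apply_pos f x) (hx₀ x (mem_univ x))
  refine ⟨f x₀, ?_⟩
  have := (exp_le_exp.2 (neg_le_of_neg_le hlog)).trans_eq (exp_log (fiberProb_apply_pos f x₀))
  rw [fiberProb, le_div_iff₀ hcard] at this
  linarith

end Entropy

section Colorings

variable {ι : Type*} [Fintype ι]

def signOf (b : Bool) : ℝ := if b then 1 else -1

noncomputable def signedSum (w : ι → ℝ) (χ : ι → Bool) : ℝ := ∑ j, w j * signOf (χ j)

lemma signedSum_neg (w : ι → ℝ) (χ : ι → Bool) : signedSum (-w) χ = -signedSum w χ := by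
  simp [signedSum]

lemma abs_signOf_sub_signOf_div_two (b c : Bool) :
    |(signOf b - signOf c) / 2| = if b = c then 0 else 1 := by
  cases b <;> cases c <;> norm_num [signOf]

variable [DecidableEq ι]

lemma sum_exp_mul_signedSum_le (w : ι → ℝ) (hw : ∀ j, |w j| ≤ 1) (u : ℝ) :
    ∑ χ : ι → Bool, exp (u * signedSum w χ) ≤
      2 ^ Fintype.card ι * exp (u ^ 2 * Fintype.card ι / 2) := by
  have hcoord : ∀ j, ∑ b : Bool, exp (u * (w j * signOf b)) ≤ 2 * exp (u ^ 2 / 2) := by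
    intro j
    have hsq : (u * w j) ^ 2 ≤ u ^ 2 := by
      rw [mul_pow]
      exact mul_le_of_le_one_right (sq_nonneg u) (sq_le_one_iff_abs_le_one _ |>.2 (hw j))
    calc ∑ b : Bool, exp (u * (w j * signOf b)) = 2 * cosh (u * w j) := by
          simp [signOf, cosh_eq]; ring_nf
      _ ≤ 2 * exp (u ^ 2 / 2) := by
          gcongr
          exact (cosh_le_exp_half_sq _).trans (exp_le_exp.2 (by linarith))
  calc ∑ χ : ι → Bool, exp (u * signedSum w χ)
      = ∏ j, ∑ b : Bool, exp (u * (w j * signOf b)) := by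
        rw [Fintype.prod_sum]
        simp only [signedSum, mul_sum, exp_sum]
    _ ≤ ∏ _j : ι, 2 * exp (u ^ 2 / 2) :=
        prod_le_prod (fun j _ => by positivity) fun j _ => hcoord j
    _ = 2 ^ Fintype.card ι * exp (u ^ 2 * Fintype.card ι / 2) := by
        rw [prod_const, card_univ, mul_pow, ← exp_nat_mul]; ring_nf

/-- Hoeffding's inequality for uniformly random signs. -/
lemma card_le_signedSum_le (w : ι → ℝ) (hw : ∀ j, |w j| ≤ 1) {t : ℝ} (ht : 0 ≤ t) :
    (#{χ | t ≤ signedSum w χ} : ℝ) / 2 ^ Fintype.card ι ≤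
      exp (-t ^ 2 / (2 * Fintype.card ι)) := by
  set n : ℝ := (Fintype.card ι : ℝ)
  set u := t / n
  have hu : 0 ≤ u := by positivity
  have hexp : u ^ 2 * n / 2 - u * t = -t ^ 2 / (2 * n) := by
    rcases eq_or_ne n 0 with hn | hn
    · simp [u, hn]
    · simp only [u]; field_simp; ring
  have hmarkov : (#{χ | t ≤ signedSum w χ} : ℝ) * exp (u * t) ≤
      2 ^ Fintype.card ι * exp (u ^ 2 * n / 2) :=
    calc (#{χ | t ≤ signedSum w χ} : ℝ) * exp (u * t)
        = ∑ χ ∈ {χ | t ≤ signedSum w χ}, exp (u * t) := by rw [sum_const, nsmul_eq_mul]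
      _ ≤ ∑ χ ∈ {χ | t ≤ signedSum w χ}, exp (u * signedSum w χ) :=
          sum_le_sum fun χ hχ => exp_le_exp.2 (mul_le_mul_of_nonneg_left (mem_filter.1 hχ).2 hu)
      _ ≤ ∑ χ, exp (u * signedSum w χ) :=
          sum_le_sum_of_subset_of_nonneg (filter_subset _ _) fun _ _ _ => (exp_pos _).le
      _ ≤ _ := sum_exp_mul_signedSum_le w hw u
  rw [div_le_iff₀' (by positivity), ← hexp, exp_sub, mul_div_assoc', le_div_iff₀ (exp_pos _)]
  exact hmarkov

lemma sum_pow_hammingDist (χ₀ : ι → Bool) (r : ℝ) :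
    ∑ χ : ι → Bool, r ^ hammingDist χ χ₀ = (1 + r) ^ Fintype.card ι := by
  have hcoord : ∀ j, ∑ b : Bool, (if b ≠ χ₀ j then r else 1) = 1 + r := fun j => by
    cases χ₀ j <;> simp [add_comm]
  calc ∑ χ : ι → Bool, r ^ hammingDist χ χ₀
      = ∏ j, ∑ b : Bool, (if b ≠ χ₀ j then r else 1) := by
        rw [Fintype.prod_sum]
        refine sum_congr rfl fun χ _ => ?_
        rw [prod_ite, prod_const, prod_const, one_pow, mul_one, hammingDist]
    _ = (1 + r) ^ Fintype.card ι := by simp only [hcoord, prod_const, card_univ]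

lemma card_hammingDist_le_mul_rpow_le (χ₀ : ι → Bool) {r t : ℝ} (hr0 : 0 < r)
    (hr1 : r ≤ 1) :
    (#{χ | (hammingDist χ χ₀ : ℝ) ≤ t} : ℝ) * r ^ t ≤ (1 + r) ^ Fintype.card ι :=
  calc (#{χ | (hammingDist χ χ₀ : ℝ) ≤ t} : ℝ) * r ^ t
      = ∑ χ ∈ {χ | (hammingDist χ χ₀ : ℝ) ≤ t}, r ^ t := by
        rw [sum_const, nsmul_eq_mul]
    _ ≤ ∑ χ ∈ {χ | (hammingDist χ χ₀ : ℝ) ≤ t}, r ^ hammingDist χ χ₀ :=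
        sum_le_sum fun χ hχ => by
          rw [← rpow_natCast]
          exact rpow_le_rpow_of_exponent_ge hr0 hr1 (mem_filter.1 hχ).2
    _ ≤ ∑ χ, r ^ hammingDist χ χ₀ :=
        sum_le_sum_of_subset_of_nonneg (filter_subset _ _) fun _ _ _ => by positivity
    _ = (1 + r) ^ Fintype.card ι := sum_pow_hammingDist χ₀ r

lemma exists_lt_hammingDist_of_card (Y : Finset (ι → Bool)) {r t : ℝ} (hr0 : 0 < r)
    (hr1 : r ≤ 1) (hY : (1 + r) ^ Fintype.card ι < #Y * r ^ t) :
    ∃ χ₁ ∈ Y, ∃ χ₂ ∈ Y, t < hammingDist χ₁ χ₂ := by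
  by_contra! hclose
  obtain ⟨χ₀, hχ₀⟩ : Y.Nonempty := by
    rw [nonempty_iff_ne_empty]; rintro rfl
    simp only [card_empty, CharP.cast_eq_zero, zero_mul] at hY
    exact hY.not_ge (by positivity)
  have hsub : Y ⊆ univ.filter fun χ => (hammingDist χ χ₀ : ℝ) ≤ t :=
    fun χ hχ => mem_filter.2 ⟨mem_univ _, hclose χ hχ χ₀ hχ₀⟩
  have := mul_le_mul_of_nonneg_right (Nat.cast_le.2 (card_le_card hsub)) (rpow_nonneg hr0.le t)
  linarith [card_hammingDist_le_mul_rpow_le χ₀ hr0 hr1 (t := t)]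

lemma fiberProb_round_signedSum_le [Nonempty ι] (w : ι → ℝ) (hw : ∀ j, |w j| ≤ 1)
    {Δ : ℝ} (hΔ : 0 < Δ) {k : ℤ} (hk : k ≠ 0) :
    fiberProb (fun χ : ι → Bool => round (signedSum w χ / Δ)) k ≤
      exp (-Δ ^ 2 / (16 * Fintype.card ι)) ^ (2 * k.natAbs) := by
  set n : ℝ := (Fintype.card ι : ℝ)
  have hn : 0 < n := by simp only [n]; exact_mod_cast Fintype.card_pos
  set a : ℝ := (k.natAbs : ℝ)
  have ha : 1 ≤ a := by simp only [a]; exact_mod_cast Int.natAbs_pos.2 hk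
  obtain ⟨v, hv, hsub⟩ : ∃ v : ι → ℝ, (∀ j, |v j| ≤ 1) ∧
      ∀ χ, round (signedSum w χ / Δ) = k → (a - 1 / 2) * Δ ≤ signedSum v χ := by
    rcases hk.lt_or_gt with hneg | hpos
    · refine ⟨-w, fun j => by simpa using hw j, fun χ hχ => ?_⟩
      have ha' : a = -k := by
        simp only [a, Nat.cast_natAbs, Int.cast_abs, abs_of_neg (Int.cast_lt_zero.2 hneg)]
      have := (abs_le.1 (abs_sub_round (signedSum w χ / Δ))).2
      rw [signedSum_neg, ← le_div_iff₀ hΔ, neg_div]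
      rw [hχ] at this
      linarith
    · refine ⟨w, hw, fun χ hχ => ?_⟩
      have ha' : a = k := by
        simp only [a, Nat.cast_natAbs, Int.cast_abs, abs_of_pos (Int.cast_pos.2 hpos)]
      have := (abs_le.1 (abs_sub_round (signedSum w χ / Δ))).1
      rw [← le_div_iff₀ hΔ]
      rw [hχ] at this
      linarith
  calc fiberProb (fun χ : ι → Bool => round (signedSum w χ / Δ)) k
      ≤ (#{χ | (a - 1 / 2) * Δ ≤ signedSum v χ} : ℝ) / 2 ^ Fintype.card ι := by
        rw [fiberProb, Fintype.card_fun, Fintype.card_bool, Nat.cast_pow, Nat.cast_two]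
        gcongr with χ
        exact hsub χ
    _ ≤ exp (-((a - 1 / 2) * Δ) ^ 2 / (2 * n)) := card_le_signedSum_le v hv (by nlinarith)
    _ ≤ exp (-Δ ^ 2 / (16 * n)) ^ (2 * k.natAbs) := by
        rw [← exp_nat_mul, exp_le_exp, div_le_iff₀ (by positivity)]
        push_cast
        rw [mul_div_assoc', div_mul_eq_mul_div, le_div_iff₀ (by positivity)]
        have : 0 ≤ (4 * a - 1) * (a - 1) := mul_nonneg (by linarith) (by linarith)
        nlinarith [mul_nonneg this (mul_nonneg (sq_nonneg Δ) hn.le)]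

lemma one_sub_le_fiberProb_round_signedSum_zero [Nonempty ι] (w : ι → ℝ)
    (hw : ∀ j, |w j| ≤ 1) {Δ : ℝ} (hΔ : 0 < Δ) :
    1 - 2 * exp (-Δ ^ 2 / (16 * Fintype.card ι)) ^ 2 ≤
      fiberProb (fun χ : ι → Bool => round (signedSum w χ / Δ)) 0 := by
  set n : ℝ := (Fintype.card ι : ℝ)
  have hn : 0 < n := by simp only [n]; exact_mod_cast Fintype.card_pos
  set f := fun χ : ι → Bool => round (signedSum w χ / Δ)
  have hsub : ∀ χ, f χ ≠ 0 →
      Δ / 2 ≤ signedSum w χ ∨ Δ / 2 ≤ signedSum (-w) χ := by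
    intro χ hχ
    have := abs_le.1 (abs_sub_round (signedSum w χ / Δ))
    rw [signedSum_neg, ← div_mul_cancel₀ (signedSum w χ) hΔ.ne']
    rcases hχ.lt_or_gt with hneg | hpos
    · have : (f χ : ℝ) ≤ -1 := by exact_mod_cast Int.le_sub_one_of_lt hneg
      right; nlinarith
    · have : (1 : ℝ) ≤ f χ := by exact_mod_cast hpos
      left; nlinarith
  have hsq : exp (-(Δ / 2) ^ 2 / (2 * n)) = exp (-Δ ^ 2 / (16 * n)) ^ 2 := by
    rw [← exp_nat_mul]; congr 1; field_simp; ring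
  have hoff :
      (#{χ | f χ ≠ 0} : ℝ) / 2 ^ Fintype.card ι ≤ 2 * exp (-Δ ^ 2 / (16 * n)) ^ 2 :=
    calc (#{χ | f χ ≠ 0} : ℝ) / 2 ^ Fintype.card ι
        ≤ ((#{χ | Δ / 2 ≤ signedSum w χ} : ℝ) + #{χ | Δ / 2 ≤ signedSum (-w) χ}) /
            2 ^ Fintype.card ι := by
          gcongr
          refine mod_cast (card_le_card fun χ hχ => ?_).trans (card_union_le _ _)
          simpa [mem_union, mem_filter] using hsub χ (mem_filter.1 hχ).2
      _ ≤ 2 * exp (-Δ ^ 2 / (16 * n)) ^ 2 := by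
          rw [add_div, ← hsq, two_mul]
          gcongr
          exacts [card_le_signedSum_le w hw (by positivity),
            card_le_signedSum_le (-w) (fun j => by simpa using hw j) (by positivity)]
  have hsplit : fiberProb f 0 + (#{χ | f χ ≠ 0} : ℝ) / 2 ^ Fintype.card ι = 1 := by
    rw [fiberProb, Fintype.card_fun, Fintype.card_bool, Nat.cast_pow, Nat.cast_two, ← add_div,
      div_eq_one_iff_eq (by positivity), ← Nat.cast_add, card_filter_add_card_filter_not]
    simp
  linarith

lemma uniformEntropy_round_signedSum_le [Nonempty ι] (w : ι → ℝ) (hw : ∀ j, |w j| ≤ 1)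
    {Δ : ℝ} (hΔ : 0 < Δ) (hρ : exp (-Δ ^ 2 / (16 * Fintype.card ι)) ≤ 1 / 2) :
    uniformEntropy (fun χ : ι → Bool => round (signedSum w χ / Δ)) ≤
      9 * exp (-Δ ^ 2 / (16 * Fintype.card ι)) :=
  sum_negMulLog_le_of_geometric_tail _ (exp_pos _).le hρ (fiberProb_nonneg _)
    (fun _ hk => fiberProb_round_signedSum_le w hw hΔ hk)
    (one_sub_le_fiberProb_round_signedSum_zero w hw hΔ)

end Colorings

lemma mul_inv_pow_div_add_two_le {m n : ℝ} (hm : 0 ≤ m) (hn : 0 < n) :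
    m * ((m / n + 2) ^ 16)⁻¹ ≤ n / 2 ^ 15 := by
  have hx : 2 ≤ m / n + 2 := by simp only [le_add_iff_nonneg_left]; positivity
  have hmx : m ≤ n * (m / n + 2) := by rw [mul_add, mul_div_cancel₀ _ hn.ne']; linarith
  rw [mul_inv_le_iff₀ (by positivity), div_mul_eq_mul_div, le_div_iff₀ (by positivity)]
  calc m * 2 ^ 15 ≤ n * (m / n + 2) * (m / n + 2) ^ 15 := by gcongr
    _ = n * (m / n + 2) ^ 16 := by ring

lemma one_add_inv_sixteen_pow_lt {N : ℕ} (hN : 0 < N) :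
    (1 + 1 / 16 : ℝ) ^ N < 2 ^ N * exp (-(N / 4)) * (1 / 16 : ℝ) ^ ((N : ℝ) / 16) := by
  have hN' : (0 : ℝ) < N := by exact_mod_cast hN
  have h16 : log (1 / 16 : ℝ) = -(4 * log 2) := by
    rw [one_div, log_inv, show (16 : ℝ) = 2 ^ 4 by norm_num, log_pow]; push_cast; ring
  have hlog : log (1 + 1 / 16 : ℝ) ≤ 1 / 16 := by
    linarith [log_le_sub_one_of_pos (show (0 : ℝ) < 1 + 1 / 16 by norm_num)]
  rw [← exp_log (show (0 : ℝ) < 1 + 1 / 16 by norm_num), ← exp_log two_pos,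
    ← exp_nat_mul, ← exp_nat_mul, rpow_def_of_pos (by norm_num), h16, ← exp_add, ← exp_add,
    exp_lt_exp]
  nlinarith [log_two_gt_d9]

lemma uniformEntropy_round_signedSum_pi_le {ι κ : Type*} [Fintype ι] [DecidableEq ι]
    [Nonempty ι] [Fintype κ] (a : κ → ι → ℝ) (ha : ∀ i j, |a i j| ≤ 1) :
    uniformEntropy (fun (χ : ι → Bool) i => round (signedSum (a i) χ /
      (16 * √(Fintype.card ι * log (Fintype.card κ / Fintype.card ι + 2))))) ≤
      Fintype.card ι / 4 := by
  set n : ℝ := (Fintype.card ι : ℝ)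
  set m : ℝ := (Fintype.card κ : ℝ)
  set L := log (m / n + 2)
  set Δ := 16 * √(n * L)
  have hn : 0 < n := by simp only [n]; exact_mod_cast Fintype.card_pos
  have hlog2 : log 2 ≤ L := log_le_log two_pos (by simp only [le_add_iff_nonneg_left]; positivity)
  have hL : 0 < L := (log_pos one_lt_two).trans_le hlog2
  have hρ : exp (-Δ ^ 2 / (16 * n)) = exp (-16 * L) := by
    simp only [Δ]; rw [mul_pow, sq_sqrt (by positivity)]; field_simp
  have hρhalf : exp (-Δ ^ 2 / (16 * n)) ≤ 1 / 2 := by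
    rw [hρ]
    calc exp (-16 * L) ≤ exp (-log 2) := exp_le_exp.2 (by linarith)
      _ = 1 / 2 := by rw [exp_neg, exp_log two_pos, one_div]
  have hexp : exp (-16 * L) = ((m / n + 2) ^ 16)⁻¹ := by
    rw [show -16 * L = ((16 : ℕ) : ℝ) * -L by push_cast; ring, exp_nat_mul, exp_neg,
      exp_log (by positivity), inv_pow]
  refine (uniformEntropy_pi_le _).trans ?_
  calc ∑ i, uniformEntropy (fun χ : ι → Bool => round (signedSum (a i) χ / Δ))
      ≤ ∑ _i : κ, 9 * exp (-16 * L) :=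
        sum_le_sum fun i _ => hρ ▸ uniformEntropy_round_signedSum_le (a i) (ha i)
          (by positivity) hρhalf
    _ = m * 9 * exp (-16 * L) := by rw [sum_const, card_univ, nsmul_eq_mul]; ring
    _ ≤ n / 4 := by
        rw [hexp, mul_right_comm]
        nlinarith [mul_inv_pow_div_add_two_le (Nat.cast_nonneg (Fintype.card κ)) hn]

lemma exists_far_colorings_signedSum_close {ι κ : Type*} [Fintype ι] [DecidableEq ι]
    [Nonempty ι] [Fintype κ] (a : κ → ι → ℝ) (ha : ∀ i j, |a i j| ≤ 1) :
    ∃ χ₁ χ₂ : ι → Bool, (Fintype.card ι : ℝ) / 16 ≤ hammingDist χ₁ χ₂ ∧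
      ∀ i, |signedSum (a i) χ₁ - signedSum (a i) χ₂| ≤
        16 * √(Fintype.card ι * log (Fintype.card κ / Fintype.card ι + 2)) := by
  set n : ℝ := (Fintype.card ι : ℝ)
  set Δ := 16 * √(n * log (Fintype.card κ / n + 2))
  have hΔ : 0 < Δ := by
    have : (0 : ℝ) ≤ Fintype.card κ / n := by positivity
    have : 0 < log (Fintype.card κ / n + 2) := log_pos (by linarith)
    positivity
  set f := fun (χ : ι → Bool) i => round (signedSum (a i) χ / Δ)
  obtain ⟨β, hβ⟩ :=
    exists_card_fiber_ge_of_uniformEntropy_le f (uniformEntropy_round_signedSum_pi_le a ha)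
  have hbig :
      (1 + 1 / 16 : ℝ) ^ Fintype.card ι < #{χ | f χ = β} * (1 / 16 : ℝ) ^ (n / 16) := by
    refine (one_add_inv_sixteen_pow_lt Fintype.card_pos).trans_le ?_
    gcongr
    simpa using hβ
  obtain ⟨χ₁, h₁, χ₂, h₂, hfar⟩ :=
    exists_lt_hammingDist_of_card _ (by norm_num) (by norm_num) hbig
  refine ⟨χ₁, χ₂, hfar.le, fun i => ?_⟩
  have hround : f χ₁ i = f χ₂ i := by rw [(mem_filter.1 h₁).2, (mem_filter.1 h₂).2]
  have := abs_sub_le_one_of_round_eq hround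
  rwa [← sub_div, abs_div, abs_of_pos hΔ, div_le_one hΔ] at this

/-- Partial-coloring form of Spencer's theorem: there is an absolute constant `C > 0` such that
for every `A ∈ ℝ^{m×n}` with `‖A‖_{1→∞} ≤ 1` and every diagonal matrix `Λ` (given by its diagonal
entries, each of absolute value at most 1), there is `v ∈ [-1,1]^n` with at least `n/C`
coordinates of absolute value exactly 1 and `‖AΛv‖_∞ ≤ C √(n log(m/n + 2))`. -/
theorem spencer_partial_coloring :
    ∃ C : ℝ, 0 < C ∧
      ∀ (m n : ℕ), 0 < m → 0 < n →
        ∀ A : Matrix (Fin m) (Fin n) ℝ, (∀ i j, |A i j| ≤ 1) →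
          ∀ Λ : Fin n → ℝ, (∀ j, |Λ j| ≤ 1) →
            ∃ v : Fin n → ℝ, (∀ j, |v j| ≤ 1) ∧
              (n : ℝ) / C ≤ (Set.ncard {j : Fin n | |v j| = 1} : ℝ) ∧
              ∀ i, |A.mulVec (fun j => Λ j * v j) i| ≤
                C * Real.sqrt ((n : ℝ) * Real.log ((m : ℝ) / (n : ℝ) + 2)) := by
  refine ⟨16, by norm_num, fun m n _ hn A hA Λ hΛ => ?_⟩
  have : Nonempty (Fin n) := ⟨⟨0, hn⟩⟩
  set a : Fin m → Fin n → ℝ := fun i j => A i j * Λ j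
  obtain ⟨χ₁, χ₂, hfar, hclose⟩ := exists_far_colorings_signedSum_close a fun i j => by
    simpa only [a, abs_mul] using mul_le_one₀ (hA i j) (abs_nonneg _) (hΛ j)
  refine ⟨fun j => (signOf (χ₁ j) - signOf (χ₂ j)) / 2, fun j => ?_, ?_, fun i => ?_⟩
  · rw [abs_signOf_sub_signOf_div_two]; split_ifs <;> norm_num
  · have hset : {j | |(signOf (χ₁ j) - signOf (χ₂ j)) / 2| = 1} =
        ↑({j | χ₁ j ≠ χ₂ j} : Finset (Fin n)) := by
      ext j; simp [abs_signOf_sub_signOf_div_two]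
    rw [hset, Set.ncard_coe_finset]
    simpa [hammingDist] using hfar
  · have hmul : A.mulVec (fun j => Λ j * ((signOf (χ₁ j) - signOf (χ₂ j)) / 2)) i =
        (signedSum (a i) χ₁ - signedSum (a i) χ₂) / 2 := by
      simp only [Matrix.mulVec, dotProduct, signedSum, a, ← sum_sub_distrib, sum_div]
      exact sum_congr rfl fun j _ => by ring
    rw [hmul, abs_div, abs_two]
    have hrow := hclose i
    simp only [Fintype.card_fin] at hrow
    linarith [sqrt_nonneg ((n : ℝ) * log ((m : ℝ) / n + 2))]
end

section
/- Let m, n be positive integers, A ∈ ℝ^{m×n} with ‖A‖_{1→∞} ≤ 1, C > 0, and δ ∈ (0,1]. If |Γ_{A,C} ∩ {−1,+1}^n| ≥ (2 − δ)^n, then for a standard Gaussian vector g ~ N(0,I_n), P[ sup_{y ∈ Γ_{A,C}} ⟨g,y⟩ ≥ ‖g‖₁ ] ≥ ((2 − δ)/2)^n. -/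
open MeasureTheory ProbabilityTheory
open scoped ENNReal

lemma neg_map : (gaussianReal 0 1).map (fun x => -x) = gaussianReal 0 1 := by
  have := gaussianReal_map_const_mul (μ := 0) (v := 1) (-1)
  simp only [neg_one_mul, mul_zero] at this
  convert this using 2
  norm_num

lemma gauss_Ioi : gaussianReal 0 1 (Set.Ioi 0) = 2⁻¹ := by
  have hd : gaussianReal 0 1 (Set.Iio (0:ℝ)) = gaussianReal 0 1 (Set.Ioi 0) := by
    conv_lhs => rw [← neg_map]
    rw [Measure.map_apply measurable_neg measurableSet_Iio]
    congr 1
    ext x; simp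
  have h0 : gaussianReal 0 1 ({0} : Set ℝ) = 0 :=
    gaussianReal_absolutelyContinuous 0 one_ne_zero (by simp)
  have hu : gaussianReal 0 1 (Set.Iio 0 ∪ {0} ∪ Set.Ioi 0) = 1 := by
    have he : (Set.Iio (0:ℝ) ∪ {0} ∪ Set.Ioi 0) = Set.univ := by
      ext x
      simp only [Set.mem_union, Set.mem_Iio, Set.mem_singleton_iff, Set.mem_Ioi, Set.mem_univ,
        iff_true]
      rcases lt_trichotomy x 0 with h | h | h
      · exact Or.inl (Or.inl h)
      · exact Or.inl (Or.inr h)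
      · exact Or.inr h
    rw [he]; simp
  have h1 : gaussianReal 0 1 (Set.Iio 0 ∪ {0} ∪ Set.Ioi 0)
      = gaussianReal 0 1 (Set.Iio 0) + gaussianReal 0 1 {0} + gaussianReal 0 1 (Set.Ioi 0) := by
    rw [measure_union ?_ measurableSet_Ioi, measure_union ?_ (measurableSet_singleton 0)]
    · rw [Set.disjoint_left]; rintro x hx rfl; exact lt_irrefl 0 (Set.mem_Iio.mp hx)
    · rw [Set.disjoint_left]; rintro x hx hx'
      rcases hx with hx | rfl
      · exact absurd (Set.mem_Ioi.mp hx') (not_lt.mpr hx.le)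
      · exact lt_irrefl 0 (Set.mem_Ioi.mp hx')
  rw [hu, hd, h0, add_zero] at h1
  exact ENNReal.eq_inv_of_mul_eq_one_left (by rw [mul_two]; exact h1.symm)

lemma gauss_Iio : gaussianReal 0 1 (Set.Iio 0) = 2⁻¹ := by
  rw [← gauss_Ioi]
  conv_lhs => rw [← neg_map]
  rw [Measure.map_apply measurable_neg measurableSet_Iio]
  congr 1
  ext x; simp

/-- `Γ_{A,C} = {x : ‖x‖_∞ ≤ 1 ∧ ‖Ax‖_∞ ≤ C √(n log(m/n + 2))}`. -/
def Gamma (m n : ℕ) (A : Matrix (Fin m) (Fin n) ℝ) (C : ℝ) : Set (Fin n → ℝ) :=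
  {x | (∀ j, |x j| ≤ 1) ∧
    ∀ i, |A.mulVec x i| ≤ C * Real.sqrt ((n : ℝ) * Real.log ((m : ℝ) / (n : ℝ) + 2))}

/-- If `Γ_{A,C}` contains at least `(2 - δ)^n` sign vectors, then for a standard Gaussian `g`,
`sup_{y ∈ Γ_{A,C}} ⟨g,y⟩ ≥ ‖g‖₁` with probability at least `((2 - δ)/2)^n`. -/
theorem gaussian_sup_ge_l1 (m n : ℕ) (hm : 0 < m) (hn : 0 < n)
    (A : Matrix (Fin m) (Fin n) ℝ) (hA : ∀ i j, |A i j| ≤ 1) (C : ℝ) (hC : 0 < C)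
    (δ : ℝ) (hδ : 0 < δ) (hδ1 : δ ≤ 1)
    (hcard : (2 - δ) ^ n ≤
      (Set.ncard {v : Fin n → ℝ | (∀ j, v j = 1 ∨ v j = -1) ∧ v ∈ Gamma m n A C} : ℝ)) :
    ENNReal.ofReal (((2 - δ) / 2) ^ n) ≤
      (Measure.pi fun _ : Fin n => gaussianReal 0 1)
        {g | (∑ j, |g j|) ≤ sSup {t | ∃ y ∈ Gamma m n A C, t = ∑ j, g j * y j}} := by
  classical
  set μ := (Measure.pi fun _ : Fin n => gaussianReal 0 1)
  set S0 := {v : Fin n → ℝ | (∀ j, v j = 1 ∨ v j = -1) ∧ v ∈ Gamma m n A C} with hS0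
  have hfin : S0.Finite := by
    apply Set.Finite.subset (Set.Finite.pi (fun _ : Fin n => (Set.finite_singleton (-1)).insert 1))
    intro v hv j _
    rcases hv.1 j with h | h <;> simp [h]
  set F := hfin.toFinset with hF
  -- the events
  set E : (Fin n → ℝ) → Set (Fin n → ℝ) :=
    fun v => Set.pi Set.univ (fun j => {x : ℝ | 0 < v j * x}) with hE
  have hset : ∀ v ∈ F, ∀ j, {x : ℝ | 0 < v j * x} = Set.Ioi 0 ∨ {x : ℝ | 0 < v j * x} = Set.Iio 0 := by
    intro v hv j
    rcases (hfin.mem_toFinset.mp hv).1 j with h | h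
    · left; ext x; simp [h]
    · right; ext x; simp [h]
  have hmeas : ∀ v ∈ F, MeasurableSet (E v) := by
    intro v hv
    refine MeasurableSet.univ_pi fun j => ?_
    rcases hset v hv j with h | h <;> rw [h]
    · exact measurableSet_Ioi
    · exact measurableSet_Iio
  have hμE : ∀ v ∈ F, μ (E v) = 2⁻¹ ^ n := by
    intro v hv
    rw [hE, Measure.pi_pi]
    rw [Finset.prod_congr rfl (fun j _ => ?_), Finset.prod_const, Finset.card_univ,
      Fintype.card_fin]
    rcases hset v hv j with h | h <;> rw [h]
    · exact gauss_Ioi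
    · exact gauss_Iio
  -- disjointness
  have hdisj : (F : Set (Fin n → ℝ)).PairwiseDisjoint E := by
    intro v hv w hw hvw
    rw [Function.onFun, Set.disjoint_left]
    intro g hg hg'
    obtain ⟨j, hj⟩ : ∃ j, v j ≠ w j := by
      by_contra h
      push_neg at h
      exact hvw (funext h)
    have h1 := hg j (Set.mem_univ j)
    have h2 := hg' j (Set.mem_univ j)
    simp only [Set.mem_setOf_eq] at h1 h2
    have hv1 := (hfin.mem_toFinset.mp hv).1 j
    have hw1 := (hfin.mem_toFinset.mp hw).1 j
    have hwv : w j = -v j := by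
      rcases hv1 with h | h <;> rcases hw1 with h' | h'
      · exact absurd (h.trans h'.symm) hj
      · rw [h, h']
      · rw [h, h']; norm_num
      · exact absurd (h.trans h'.symm) hj
    rw [hwv] at h2
    nlinarith
  -- inclusion
  have hincl : (⋃ v ∈ F, E v) ⊆
      {g : Fin n → ℝ | (∑ j, |g j|) ≤ sSup {t | ∃ y ∈ Gamma m n A C, t = ∑ j, g j * y j}} := by
    intro g hg
    simp only [Set.mem_iUnion] at hg
    obtain ⟨v, hv, hgv⟩ := hg
    have hvS := hfin.mem_toFinset.mp hv
    have habs : ∀ j, |g j| = g j * v j := by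
      intro j
      have h1 := hgv j (Set.mem_univ j)
      simp only [Set.mem_setOf_eq] at h1
      rcases hvS.1 j with h | h <;> rw [h] at h1 ⊢
      · rw [mul_one]; rw [one_mul] at h1; exact abs_of_pos h1
      · rw [mul_neg_one]; rw [neg_one_mul] at h1; exact abs_of_neg (neg_pos.mp h1)
    have hbdd : BddAbove {t | ∃ y ∈ Gamma m n A C, t = ∑ j, g j * y j} := by
      refine ⟨∑ j, |g j|, ?_⟩
      rintro t ⟨y, hy, rfl⟩
      calc ∑ j, g j * y j ≤ ∑ j, |g j * y j| :=
            Finset.sum_le_sum fun j _ => le_abs_self _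
        _ ≤ ∑ j, |g j| := Finset.sum_le_sum fun j _ => by
            rw [abs_mul]
            exact mul_le_of_le_one_right (abs_nonneg _) (hy.1 j)
    have hmem : (∑ j, g j * v j) ∈ {t | ∃ y ∈ Gamma m n A C, t = ∑ j, g j * y j} :=
      ⟨v, hvS.2, rfl⟩
    have := le_csSup hbdd hmem
    simp only [Set.mem_setOf_eq]
    calc ∑ j, |g j| = ∑ j, g j * v j := Finset.sum_congr rfl fun j _ => habs j
      _ ≤ _ := this
  -- put it together
  have hsum : μ (⋃ v ∈ F, E v) = (F.card : ℝ≥0∞) * 2⁻¹ ^ n := by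
    rw [measure_biUnion_finset hdisj hmeas]
    rw [Finset.sum_congr rfl hμE, Finset.sum_const, nsmul_eq_mul]
  refine le_trans ?_ (le_trans (le_of_eq hsum.symm) (measure_mono hincl))
  have hcardF : (2 - δ) ^ n ≤ (F.card : ℝ) := by
      rwa [Set.ncard_eq_toFinset_card S0 hfin] at hcard
  have h2δ : (0:ℝ) ≤ 2 - δ := by linarith
  calc ENNReal.ofReal (((2 - δ) / 2) ^ n)
      ≤ ENNReal.ofReal ((F.card : ℝ) * (2⁻¹) ^ n) := by
        apply ENNReal.ofReal_le_ofReal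
        rw [div_pow, div_eq_mul_inv, ← inv_pow]
        exact mul_le_mul_of_nonneg_right hcardF (by positivity)
    _ = (F.card : ℝ≥0∞) * 2⁻¹ ^ n := by
        rw [ENNReal.ofReal_mul (by positivity), ENNReal.ofReal_natCast,
          ENNReal.ofReal_pow (by norm_num)]
        congr 1
        rw [ENNReal.ofReal_inv_of_pos two_pos]
        norm_num
end

section
/- Let m, n be positive integers, A ∈ ℝ^{m×n} with ‖A‖_{1→∞} ≤ 1, C > 0, ε ∈ (0,1], η ∈ (0, 1/16], and let g ∈ ℝ^n be a fixed vector. Assume: (i) for every subset S ⊆ [n] with |S| ≥ (1−η)n there exists z ∈ Γ_{A,C} with z_j = 0 for all j ∉ S and ⟨g,z⟩/√n ≥ √n/4; and (ii) sup_{y' ∈ Γ_{A,C(1+ε)}} ⟨g,y'⟩/√n − sup_{y ∈ Γ_{A,C}} ⟨g,y⟩/√n < ε√n/8. Then every x ∈ Γ_{A,C} satisfying ⟨g,x⟩/√n ≥ sup_{y ∈ Γ_{A,C}} ⟨g,y⟩/√n − ε·η·√n has at least η·n coordinates j with |x_j| ≥ 1 − ε. -/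
/-- Deterministic stability step: under hypotheses (i) and (ii), every near-maximizer of
`x ↦ ⟨g,x⟩/√n` over `Γ_{A,C}` has at least `ηn` coordinates with `|x_j| ≥ 1 - ε`. -/
theorem deterministic_stability (m n : ℕ) (hm : 0 < m) (hn : 0 < n)
    (A : Matrix (Fin m) (Fin n) ℝ) (hA : ∀ i j, |A i j| ≤ 1) (C : ℝ) (hC : 0 < C)
    (ε : ℝ) (hε : 0 < ε) (hε1 : ε ≤ 1) (η : ℝ) (hη : 0 < η) (hη16 : η ≤ 1 / 16)
    (g : Fin n → ℝ)
    (h1 : ∀ S : Finset (Fin n), (1 - η) * n ≤ (S.card : ℝ) →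
      ∃ z ∈ Gamma m n A C, (∀ j ∉ S, z j = 0) ∧
        Real.sqrt n / 4 ≤ (∑ j, g j * z j) / Real.sqrt n)
    (h2 : sSup {t | ∃ y ∈ Gamma m n A (C * (1 + ε)), t = (∑ j, g j * y j) / Real.sqrt n}
        - sSup {t | ∃ y ∈ Gamma m n A C, t = (∑ j, g j * y j) / Real.sqrt n}
        < ε * Real.sqrt n / 8) :
    ∀ x ∈ Gamma m n A C,
      sSup {t | ∃ y ∈ Gamma m n A C, t = (∑ j, g j * y j) / Real.sqrt n}
          - ε * η * Real.sqrt n ≤ (∑ j, g j * x j) / Real.sqrt n →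
        η * n ≤ (Set.ncard {j : Fin n | 1 - ε ≤ |x j|} : ℝ) := by
  classical
  intro x hx hxnear
  by_contra hcon
  push_neg at hcon
  set L := Real.sqrt ((n : ℝ) * Real.log ((m : ℝ) / (n : ℝ) + 2)) with hLdef
  have hL : 0 ≤ L := Real.sqrt_nonneg _
  have hnpos : (0 : ℝ) < n := by exact_mod_cast hn
  have hsn : 0 < Real.sqrt n := Real.sqrt_pos.mpr hnpos
  set T : Finset (Fin n) := Finset.univ.filter (fun j => 1 - ε ≤ |x j|) with hT
  have hset : {j : Fin n | 1 - ε ≤ |x j|} = ↑T := by ext j; simp [hT]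
  rw [hset, Set.ncard_coe_finset] at hcon
  have hScard : (1 - η) * n ≤ ((Tᶜ).card : ℝ) := by
    have hc : (Tᶜ).card = n - T.card := by simp [Finset.card_compl]
    have h2' : T.card ≤ n := le_trans (Finset.card_le_univ T) (by simp)
    have : ((Tᶜ).card : ℝ) = (n : ℝ) - T.card := by
      rw [hc]; push_cast [Nat.cast_sub h2']; ring
    rw [this]; nlinarith [hcon]
  obtain ⟨z, hzΓ, hz0, hzg⟩ := h1 Tᶜ hScard
  have hz0' : ∀ j, 1 - ε ≤ |x j| → z j = 0 := by
    intro j hj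
    exact hz0 j (by simp [hT]; linarith)
  set y' := x + ε • z with hy'
  have hy'j : ∀ j, y' j = x j + ε * z j := fun j => rfl
  have hy'Γ : y' ∈ Gamma m n A (C * (1 + ε)) := by
    constructor
    · intro j
      by_cases hj : 1 - ε ≤ |x j|
      · rw [hy'j, hz0' j hj, mul_zero, add_zero]; exact hx.1 j
      · push_neg at hj
        have hzj := hzΓ.1 j
        calc |y' j| ≤ |x j| + ε * |z j| := by
              rw [hy'j]; refine (abs_add_le _ _).trans ?_; rw [abs_mul, abs_of_pos hε]
          _ ≤ (1 - ε) + ε * 1 := by nlinarith [abs_nonneg (z j)]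
          _ = 1 := by ring
    · intro i
      have hAx := hx.2 i
      have hAz := hzΓ.2 i
      have heq : A.mulVec y' i = A.mulVec x i + ε * A.mulVec z i := by
        rw [hy', Matrix.mulVec_add, Matrix.mulVec_smul]; simp
      rw [heq]
      calc |A.mulVec x i + ε * A.mulVec z i| ≤ |A.mulVec x i| + ε * |A.mulVec z i| := by
            refine (abs_add_le _ _).trans ?_; rw [abs_mul, abs_of_pos hε]
        _ ≤ C * L + ε * (C * L) := by nlinarith [abs_nonneg (A.mulVec z i)]
        _ = C * (1 + ε) * L := by ring
  have hsum : (∑ j, g j * y' j) = (∑ j, g j * x j) + ε * ∑ j, g j * z j := by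
    simp only [hy'j, mul_add, Finset.sum_add_distrib, Finset.mul_sum]
    congr 1
    apply Finset.sum_congr rfl
    intro j _
    ring
  have hdiv : (∑ j, g j * y' j) / Real.sqrt n
      = (∑ j, g j * x j) / Real.sqrt n + ε * ((∑ j, g j * z j) / Real.sqrt n) := by
    rw [hsum]; field_simp
  have hbdd : BddAbove {t | ∃ y ∈ Gamma m n A (C * (1 + ε)),
      t = (∑ j, g j * y j) / Real.sqrt n} := by
    refine ⟨(∑ j, |g j|) / Real.sqrt n, ?_⟩
    rintro t ⟨y, hy, rfl⟩
    have hsb : ∑ j, g j * y j ≤ ∑ j, |g j| := by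
      apply Finset.sum_le_sum
      intro j _
      have hyj := hy.1 j
      calc g j * y j ≤ |g j * y j| := le_abs_self _
        _ = |g j| * |y j| := abs_mul _ _
        _ ≤ |g j| * 1 := by nlinarith [abs_nonneg (g j)]
        _ = |g j| := mul_one _
    exact div_le_div_of_nonneg_right hsb hsn.le |>.trans_eq rfl
  have hle : (∑ j, g j * y' j) / Real.sqrt n
      ≤ sSup {t | ∃ y ∈ Gamma m n A (C * (1 + ε)), t = (∑ j, g j * y j) / Real.sqrt n} :=
    le_csSup hbdd ⟨y', hy'Γ, rfl⟩
  rw [hdiv] at hle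
  nlinarith [mul_pos hε hsn, hzg, hxnear, h2, hsn]
end

section
/- Let m, n be positive integers, A ∈ ℝ^{m×n}, v ∈ ℝ^n, δ > 0, ρ₀ ∈ [0,1], ρ₊, ρ₋ ∈ (ℝ_{≥0})^m, and Λ ∈ [0, 2√n]. Suppose x ∈ [−1,1]^n satisfies τ := δ·‖Ax‖_∞ ≥ 10√n and −ρ₀·⟨v,x⟩/√n + ρ₊ᵀ A x − ρ₋ᵀ A x ≤ √n − τ. Then the vector y := (10√n/τ)·x satisfies: y ∈ [−1,1]^n, ‖Ay‖_∞ = 10√n/δ, and −ρ₀·⟨v,y⟩/√n + ρ₊ᵀ A y − ρ₋ᵀ A y ≤ −ρ₀·Λ. -/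
/-! Scaling `x` by `c = 10√n/τ ∈ [0, 1]` keeps it in the cube, scales `‖Ax‖_∞` from `τ/δ`
down to `10√n/δ`, and scales the linear objective, whose value at `x` is at most `√n - τ`, to at
most `c√n - 10√n ≤ -9√n`; this is below `-ρ₀Λ` because `ρ₀Λ ≤ Λ ≤ 2√n`. -/

open Matrix

lemma Matrix.iSup_abs_mulVec_smul {ι κ : Type*} [Fintype κ] (A : Matrix ι κ ℝ) (x : κ → ℝ)
    {c : ℝ} (hc : 0 ≤ c) : ⨆ i, |(A *ᵥ (c • x)) i| = c * ⨆ i, |(A *ᵥ x) i| := by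
  simp only [mulVec_smul, Pi.smul_apply, smul_eq_mul, abs_mul, abs_of_nonneg hc]
  exact (Real.mul_iSup_of_nonneg hc _).symm

lemma linear_objective_smul {ι κ : Type*} [Fintype ι] [Fintype κ] (A : Matrix ι κ ℝ)
    (v : κ → ℝ) (a b : ℝ) (p q : ι → ℝ) (c : ℝ) (x : κ → ℝ) :
    -a * (∑ j, v j * (c • x) j) / b + (∑ i, p i * (A *ᵥ (c • x)) i)
        - (∑ i, q i * (A *ᵥ (c • x)) i)
      = c * (-a * (∑ j, v j * x j) / b + (∑ i, p i * (A *ᵥ x) i) - (∑ i, q i * (A *ᵥ x) i)) := by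
  change -a * (v ⬝ᵥ c • x) / b + p ⬝ᵥ (A *ᵥ c • x) - q ⬝ᵥ (A *ᵥ c • x)
    = c * (-a * (v ⬝ᵥ x) / b + p ⬝ᵥ (A *ᵥ x) - q ⬝ᵥ (A *ᵥ x))
  simp only [mulVec_smul, dotProduct_smul, smul_eq_mul]
  ring

theorem width_reduction_rescale_general (m n : ℕ)
    (A : Matrix (Fin m) (Fin n) ℝ) (v : Fin n → ℝ) (δ : ℝ) (hδ : 0 < δ)
    (ρ₀ : ℝ) (hρ₀1 : ρ₀ ≤ 1)
    (ρp ρm : Fin m → ℝ)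
    (Λ : ℝ) (hΛ0 : 0 ≤ Λ) (hΛ : Λ ≤ 2 * Real.sqrt n)
    (x : Fin n → ℝ) (hx : ∀ j, |x j| ≤ 1)
    (τ : ℝ) (hτdef : τ = δ * (⨆ i, |A.mulVec x i|))
    (hτ : 10 * Real.sqrt n ≤ τ)
    (hineq : -ρ₀ * (∑ j, v j * x j) / Real.sqrt n
        + (∑ i, ρp i * A.mulVec x i) - (∑ i, ρm i * A.mulVec x i) ≤ Real.sqrt n - τ)
    (y : Fin n → ℝ) (hy : y = fun j => (10 * Real.sqrt n / τ) * x j) :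
    (∀ j, |y j| ≤ 1) ∧
    (⨆ i, |A.mulVec y i|) = 10 * Real.sqrt n / δ ∧
    -ρ₀ * (∑ j, v j * y j) / Real.sqrt n
        + (∑ i, ρp i * A.mulVec y i) - (∑ i, ρm i * A.mulVec y i) ≤ -ρ₀ * Λ := by
  set c := 10 * Real.sqrt n / τ
  obtain rfl : y = c • x := hy
  have hs : 0 ≤ Real.sqrt n := Real.sqrt_nonneg n
  have hτ0 : 0 ≤ τ := by linarith
  have hc0 : 0 ≤ c := by positivity
  have hc1 : c ≤ 1 := div_le_one_of_le₀ hτ hτ0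
  have hcτ : c * τ = 10 * Real.sqrt n := div_mul_cancel_of_imp fun h => by linarith
  refine ⟨fun j => ?_, ?_, ?_⟩
  · simpa [abs_mul, abs_of_nonneg hc0] using mul_le_one₀ hc1 (abs_nonneg _) (hx j)
  · rw [iSup_abs_mulVec_smul A x hc0, ← hcτ, hτdef]
    field_simp
  · rw [linear_objective_smul]
    calc _ ≤ c * (Real.sqrt n - τ) := mul_le_mul_of_nonneg_left hineq hc0
      _ = c * Real.sqrt n - 10 * Real.sqrt n := by rw [mul_sub, hcτ]
      _ ≤ -Λ := by linarith [mul_le_of_le_one_left hs hc1]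
      _ ≤ -ρ₀ * Λ := by rw [neg_mul]; exact neg_le_neg (mul_le_of_le_one_left hΛ0 hρ₀1)

/-- Rescaling step of the width-reduction argument: if `x ∈ [-1,1]^n` has
`τ := δ‖Ax‖_∞ ≥ 10√n` and satisfies `-ρ₀⟨v,x⟩/√n + ρ₊ᵀAx - ρ₋ᵀAx ≤ √n - τ`, then
`y := (10√n/τ)·x` lies in `[-1,1]^n`, has `‖Ay‖_∞ = 10√n/δ`, and satisfies
`-ρ₀⟨v,y⟩/√n + ρ₊ᵀAy - ρ₋ᵀAy ≤ -ρ₀Λ`. -/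
theorem width_reduction_rescale (m n : ℕ) (hm : 0 < m) (hn : 0 < n)
    (A : Matrix (Fin m) (Fin n) ℝ) (v : Fin n → ℝ) (δ : ℝ) (hδ : 0 < δ)
    (ρ₀ : ℝ) (hρ₀ : 0 ≤ ρ₀) (hρ₀1 : ρ₀ ≤ 1)
    (ρp ρm : Fin m → ℝ) (hρp : ∀ i, 0 ≤ ρp i) (hρm : ∀ i, 0 ≤ ρm i)
    (Λ : ℝ) (hΛ0 : 0 ≤ Λ) (hΛ : Λ ≤ 2 * Real.sqrt n)
    (x : Fin n → ℝ) (hx : ∀ j, |x j| ≤ 1)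
    (τ : ℝ) (hτdef : τ = δ * (⨆ i, |A.mulVec x i|))
    (hτ : 10 * Real.sqrt n ≤ τ)
    (hineq : -ρ₀ * (∑ j, v j * x j) / Real.sqrt n
        + (∑ i, ρp i * A.mulVec x i) - (∑ i, ρm i * A.mulVec x i) ≤ Real.sqrt n - τ)
    (y : Fin n → ℝ) (hy : y = fun j => (10 * Real.sqrt n / τ) * x j) :
    (∀ j, |y j| ≤ 1) ∧
    (⨆ i, |A.mulVec y i|) = 10 * Real.sqrt n / δ ∧
    -ρ₀ * (∑ j, v j * y j) / Real.sqrt n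
        + (∑ i, ρp i * A.mulVec y i) - (∑ i, ρm i * A.mulVec y i) ≤ -ρ₀ * Λ :=
  width_reduction_rescale_general m n A v δ hδ ρ₀ hρ₀1 ρp ρm Λ hΛ0 hΛ x hx τ hτdef hτ hineq y hy
end
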